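/- arXiv:2311.03255 — 3 statements merged into one kernel-verified Lean document; each statement's English description precedes it below -/
import Mathlib

section
/- There are no 1-oriented and no 2-oriented Spherical Diagrams. -/
open scoped RealInnerProductSpace
open scoped Classical

noncomputable section

/-- Points of ℝ³ (with the Euclidean norm). -/
abbrev Pt : Type := EuclideanSpace ℝ (Fin 3)

/-- The unit sphere in ℝ³. -/
def unitSphere : Set Pt := {x | ‖x‖ = 1}

/-- The determinant (triple product) of three vectors of ℝ³. -/
def det3 (x y z : Pt) : ℝ :=
  x 0 * (y 1 * z 2 - y 2 * z 1) - x 1 * (y 0 * z 2 - y 2 * z 0) + x 2 * (y 0 * z 1 - y 1 * z 0)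

/-- The point at parameter `t` of the geodesic arc from `p` to `q`:
the radial projection of `(1-t)•p + t•q` onto the sphere. -/
def gpt (p q : Pt) (t : ℝ) : Pt := ‖(1 - t) • p + t • q‖⁻¹ • ((1 - t) • p + t • q)

/-- The geodesic arc joining `p` and `q` (as a set of points). -/
def gseg (p q : Pt) : Set Pt := gpt p q '' Set.Icc 0 1

/-- The relative interior of the geodesic arc joining `p` and `q`. -/
def gsegInt (p q : Pt) : Set Pt := gpt p q '' Set.Ioo 0 1

/-- A geodesic arc on the unit sphere, joining two distinct non-antipodal unit points. -/
structure Arc where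
  p : Pt
  q : Pt
  unit_p : ‖p‖ = 1
  unit_q : ‖q‖ = 1
  ne : p ≠ q
  ne_neg : p ≠ -q

/-- The set of points of an arc. -/
def Arc.carrier (a : Arc) : Set Pt := gseg a.p a.q

/-- The relative interior of an arc. -/
def Arc.relint (a : Arc) : Set Pt := gsegInt a.p a.q

/-- The two endpoints of an arc. -/
def Arc.endpoints (a : Arc) : Set Pt := {a.p, a.q}

/-- The endpoint of `a` other than `x`. -/
def Arc.other (a : Arc) (x : Pt) : Pt := if x = a.p then a.q else a.p

/-- `b` hits `a`: an endpoint of `b` lies in the relative interior of `a`. -/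
def Arc.Hits (b a : Arc) : Prop := ∃ x ∈ b.endpoints, x ∈ a.relint

/-- `a` blocks `b`: an endpoint of `b` lies in the relative interior of `a`. -/
def Arc.Blocks (a b : Arc) : Prop := Arc.Hits b a

/-- A Spherical Diagram: a finite nonempty collection of geodesic arcs with pairwise
disjoint relative interiors, each arc being blocked by arcs of the collection at
each of its endpoints. -/
def IsSD (D : Set Arc) : Prop :=
  D.Finite ∧ D.Nonempty ∧
  (∀ a ∈ D, ∀ b ∈ D, a ≠ b → a.relint ∩ b.relint = ∅) ∧
  (∀ a ∈ D, ∀ x ∈ a.endpoints, ∃ b ∈ D, x ∈ b.relint)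

/-- A Spherical Occlusion Diagram: an SD where, for each arc `a`, all arcs hitting `a`
reach it from the same side of the great circle containing `a`. -/
def IsSOD (D : Set Arc) : Prop :=
  IsSD D ∧ ∀ a ∈ D,
    (∀ b ∈ D, Arc.Hits b a → ∀ y ∈ b.relint, 0 < det3 a.p a.q y) ∨
    (∀ b ∈ D, Arc.Hits b a → ∀ y ∈ b.relint, det3 a.p a.q y < 0)

/-- Sign associated to an orientation: `+1` for clockwise, `-1` for counterclockwise. -/
def swirlSign (cw : Bool) : ℝ := if cw then 1 else -1

/-- A swirl, given as a cyclic sequence of arcs `s` with hit points `x`: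
`x i` is the endpoint of `s i` lying in the relative interior of `s (i+1)`,
and at every hit point the cycle turns in the direction prescribed by `cw`
(clockwise if `cw = true`, counterclockwise otherwise, as seen from outside). -/
def IsSwirlSeq (D : Set Arc) {n : ℕ} (s : ZMod n → Arc) (x : ZMod n → Pt) (cw : Bool) : Prop :=
  0 < n ∧ Function.Injective s ∧ (∀ i, s i ∈ D) ∧
  (∀ i, x i ∈ (s i).endpoints ∧ x i ∈ (s (i + 1)).relint) ∧
  (∀ i, 0 < swirlSign cw * det3 (x i) ((s i).other (x i)) (x (i + 1)))

/-- `S` is the set of arcs of a swirl of `D` with orientation `cw`. -/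
def IsSwirl (D : Set Arc) (S : Set Arc) (cw : Bool) : Prop :=
  ∃ (n : ℕ) (s : ZMod n → Arc) (x : ZMod n → Pt),
    IsSwirlSeq D s x cw ∧ S = Set.range s

/-- The number of swirls of `D` (a swirl is identified by its set of arcs together
with its orientation). -/
def swirlCount (D : Set Arc) : ℕ :=
  Set.ncard {Sb : Set Arc × Bool | IsSwirl D Sb.1 Sb.2}

/-- A set on the sphere is spherically convex if it contains the geodesic arc
between any two of its non-antipodal points. -/
def SphConvex (S : Set Pt) : Prop :=
  S ⊆ unitSphere ∧ ∀ x ∈ S, ∀ y ∈ S, x ≠ -y → gseg x y ⊆ S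

/-- The union of the points of a collection of arcs. -/
def arcsUnion (S : Set Arc) : Set Pt := ⋃ a ∈ S, a.carrier

/-- `E` is the eye of the swirl with arc set `S`: the (closure of the) spherically
convex one among the regions into which the arcs of the swirl separate the sphere. -/
def IsEye (S : Set Arc) (E : Set Pt) : Prop :=
  ∃ z ∈ unitSphere \ arcsUnion S,
    E = closure (connectedComponentIn (unitSphere \ arcsUnion S) z) ∧ SphConvex E

/-- The interior of a subset of the sphere, relative to the sphere. -/
def sphInterior (S : Set Pt) : Set Pt :=
  {x | x ∈ S ∧ ∃ ε > 0, ∀ y ∈ unitSphere, ‖y - x‖ < ε → y ∈ S}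

/-- The boundary (within the sphere) of a closed region of the sphere. -/
def sphBoundary (S : Set Pt) : Set Pt := S \ sphInterior S

/-- Two swirls (with arc sets `S₁`, `S₂` and eyes `E₁`, `E₂`) are contiguous if their
eyes are adjacent along a common arc `a` and also share an endpoint of `a`. -/
def Contiguous (S₁ S₂ : Set Arc) (E₁ E₂ : Set Pt) : Prop :=
  ∃ a, a ∈ S₁ ∧ a ∈ S₂ ∧ (E₁ ∩ E₂ ∩ a.relint).Nonempty ∧
    ∃ e ∈ a.endpoints, e ∈ E₁ ∧ e ∈ E₂

/-- Two swirls with arc sets `S₁` and `S₂` are contiguous (eyes quantified). -/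
def ContiguousSwirls (S₁ S₂ : Set Arc) : Prop :=
  ∃ E₁ E₂, IsEye S₁ E₁ ∧ IsEye S₂ E₂ ∧ Contiguous S₁ S₂ E₁ E₂

/-- `D` is oriented by the set of poles `P` via `f`: the poles are unit points, no two
of them antipodal, and each arc `a ∈ D` lies on the great circle through `f a` and its
antipode but contains neither `f a` nor `-f a`. -/
def OrientedBy (D : Set Arc) (P : Finset Pt) (f : Arc → Pt) : Prop :=
  (∀ p ∈ P, ‖p‖ = 1) ∧ (∀ p ∈ P, ∀ q ∈ P, p ≠ -q) ∧
  (∀ a ∈ D, f a ∈ P ∧ det3 a.p a.q (f a) = 0 ∧ f a ∉ a.carrier ∧ -f a ∉ a.carrier)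

/-- `D` is `k`-oriented. -/
def IsKOriented (k : ℕ) (D : Set Arc) : Prop :=
  ∃ (P : Finset Pt) (f : Arc → Pt), P.card = k ∧ OrientedBy D P f

/-- A configuration of poles is non-degenerate if no three of them lie on a common
great circle (equivalently, any three distinct poles are linearly independent). -/
def Nondegenerate (P : Finset Pt) : Prop :=
  ∀ p ∈ P, ∀ q ∈ P, ∀ r ∈ P, p ≠ q → p ≠ r → q ≠ r → det3 p q r ≠ 0

/-- The great circle through two linearly independent points `p`, `q`. -/
def greatCircleThrough (p q : Pt) : Set Pt := {z | ‖z‖ = 1 ∧ det3 p q z = 0}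

/-- The number of distinct great circles containing the pole `p` and at least one
other pole of `P`. -/
def circCount (P : Finset Pt) (p : Pt) : ℕ :=
  Set.ncard {C : Set Pt | ∃ q ∈ P, q ≠ p ∧ C = greatCircleThrough p q}

/-- The configuration of poles `P` has alignment `ds` (as a multiset). -/
def HasAlignment (P : Finset Pt) (ds : Multiset ℕ) : Prop :=
  Multiset.map (circCount P) P.val = ds

/-- A great circle of the unit sphere. -/
def IsGreatCircle (C : Set Pt) : Prop :=
  ∃ v : Pt, ‖v‖ = 1 ∧ C = {z : Pt | ‖z‖ = 1 ∧ (inner ℝ v z : ℝ) = 0}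

/-- An attractor of a configuration of poles `P`: a choice, for each pole, of either
the pole itself or its antipode. -/
def IsAttractor (P : Finset Pt) (A : Set Pt) : Prop :=
  ∃ g : Pt → Pt, (∀ p ∈ P, g p = p ∨ g p = -p) ∧ A = g '' ↑P

/-- The spherical convex hull of a set `A`: the radial projection onto the sphere of
the (punctured) convex hull of `A`. -/
def sphericalHull (A : Set Pt) : Set Pt :=
  {x | ∃ y ∈ convexHull ℝ A, y ≠ 0 ∧ x = ‖y‖⁻¹ • y}

/-- The union of the points of all arcs of a diagram. -/
def diagUnion (D : Set Arc) : Set Pt := ⋃ a ∈ D, a.carrier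

/-- `x` and `y` are `R`-connected with respect to `D`: they are joined by a path that
follows the arcs of `D` while remaining within `R`. -/
def RConnected (D : Set Arc) (R : Set Pt) (x y : Pt) : Prop :=
  ∃ γ : Path x y, ∀ t, γ t ∈ diagUnion D ∩ R

/-- `x` and `y` are internally `R`-connected with respect to `D`: they are joined by a
path along the arcs of `D` lying in the interior of `R` except possibly at its ends. -/
def IntRConnected (D : Set Arc) (R : Set Pt) (x y : Pt) : Prop :=
  ∃ γ : Path x y, (∀ t, γ t ∈ diagUnion D) ∧
    ∀ t : unitInterval, t ≠ 0 → t ≠ 1 → γ t ∈ sphInterior R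

/-- The arc `a` crosses the set `C` at `x`: `x` is an isolated point of `a ∩ C` in the
relative interior of `a`, and every neighborhood of `x` contains points of `C`
strictly on both sides of the great circle containing `a`. -/
def CrossesAt (a : Arc) (C : Set Pt) (x : Pt) : Prop :=
  x ∈ a.relint ∧ x ∈ C ∧
  (∃ ε > 0, ∀ y ∈ a.carrier ∩ C, ‖y - x‖ < ε → y = x) ∧
  (∀ ε > 0, (∃ y ∈ C, ‖y - x‖ < ε ∧ 0 < det3 a.p a.q y) ∧
            (∃ y ∈ C, ‖y - x‖ < ε ∧ det3 a.p a.q y < 0))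

/-- The arc `a` crosses the set `C`. -/
def Crosses (a : Arc) (C : Set Pt) : Prop := ∃ x, CrossesAt a C x

/-- The arc `a` thrusts the boundary of the region `R` at `x`: `a` meets the boundary
of `R` at `x` and `a` also meets the interior of `R`. -/
def ThrustsAt (a : Arc) (R : Set Pt) (x : Pt) : Prop :=
  x ∈ a.carrier ∧ x ∈ sphBoundary R ∧ (a.carrier ∩ sphInterior R).Nonempty

/-- `v` is a vertex (extreme point) of the spherically convex region `H`. -/
def SphExtreme (H : Set Pt) (v : Pt) : Prop :=
  v ∈ H ∧ ∀ p ∈ H, ∀ q ∈ H, p ≠ -q → v ∈ gsegInt p q → p = q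

/-- `E` is an edge of the spherically convex region `H`: a geodesic arc between two
vertices of `H` contained in the boundary of `H`. -/
def EdgeOf (H : Set Pt) (E : Set Pt) : Prop :=
  ∃ v w, SphExtreme H v ∧ SphExtreme H w ∧ v ≠ w ∧ v ≠ -w ∧
    E = gseg v w ∧ E ⊆ sphBoundary H


-- ==== auxiliary ====

lemma normSmul (c : ℝ) (hc : 0 < c) (y : Pt) :
    ‖c • y‖⁻¹ • (c • y) = ‖y‖⁻¹ • y := by
  rcases eq_or_ne y 0 with rfl | hy
  · simp
  · have h1 : ‖y‖ ≠ 0 := norm_ne_zero_iff.mpr hy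
    rw [norm_smul, Real.norm_eq_abs, abs_of_pos hc, smul_smul]
    congr 1
    field_simp

def LinIndep (p q : Pt) : Prop := ∀ s t : ℝ, s • p + t • q = 0 → s = 0 ∧ t = 0

lemma unit_indep {p q : Pt} (hp : ‖p‖ = 1) (hq : ‖q‖ = 1) (h1 : p ≠ q) (h2 : p ≠ -q) :
    LinIndep p q := by
  intro s t h
  have hq0 : q ≠ 0 := by intro h0; rw [h0] at hq; simp at hq
  have hp0 : p ≠ 0 := by intro h0; rw [h0] at hp; simp at hp
  by_cases hs : s = 0
  · subst hs
    simp at h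
    rcases h with h | h
    · exact ⟨rfl, h⟩
    · exact absurd h hq0
  · exfalso
    have hps : p = (-t/s) • q := by
      have : s • p = (-t) • q := by
        rw [neg_smul]
        linear_combination (norm := module) h
      calc p = s⁻¹ • (s • p) := by rw [smul_smul, inv_mul_cancel₀ hs, one_smul]
        _ = s⁻¹ • ((-t) • q) := by rw [this]
        _ = (-t/s) • q := by rw [smul_smul]; congr 1; field_simp
    have habs : |(-t/s)| = 1 := by
      have := congrArg norm hps
      rw [hp, norm_smul, Real.norm_eq_abs, hq, mul_one] at this
      exact this.symm
    rcases abs_eq (by norm_num : (0:ℝ) ≤ 1) |>.mp habs with h' | h'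
    · rw [h', one_smul] at hps; exact h1 hps
    · rw [h', neg_one_smul] at hps; exact h2 hps

lemma combo_ne_zero {p q : Pt} (h : LinIndep p q) {s t : ℝ} (hst : ¬(s = 0 ∧ t = 0)) :
    s • p + t • q ≠ 0 := fun h0 => hst (h s t h0)

lemma gpt_zero {p : Pt} (q : Pt) (hp : ‖p‖ = 1) : gpt p q 0 = p := by
  simp [gpt, hp]

lemma gpt_one (p : Pt) {q : Pt} (hq : ‖q‖ = 1) : gpt p q 1 = q := by
  simp [gpt, hq]

lemma gpt_mem_gseg (p q : Pt) {t : ℝ} (ht : t ∈ Set.Icc (0:ℝ) 1) : gpt p q t ∈ gseg p q :=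
  Set.mem_image_of_mem _ ht

lemma gsegInt_subset (p q : Pt) : gsegInt p q ⊆ gseg p q :=
  Set.image_mono Set.Ioo_subset_Icc_self

lemma mem_gseg_elim {p q z : Pt} (hz : z ∈ gseg p q) :
    ∃ l m : ℝ, 0 ≤ l ∧ 0 ≤ m ∧ ¬(l = 0 ∧ m = 0) ∧ z = ‖l • p + m • q‖⁻¹ • (l • p + m • q) := by
  obtain ⟨t, ht, rfl⟩ := hz
  exact ⟨1 - t, t, by linarith [ht.1, ht.2], ht.1,
    fun h => by have := h.1; have := h.2; linarith, rfl⟩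

lemma mem_gsegInt_iff {p q : Pt} (z : Pt) :
    z ∈ gsegInt p q ↔ ∃ l m : ℝ, 0 < l ∧ 0 < m ∧ z = ‖l • p + m • q‖⁻¹ • (l • p + m • q) := by
  constructor
  · rintro ⟨t, ht, rfl⟩
    exact ⟨1 - t, t, by linarith [ht.2], ht.1, rfl⟩
  · rintro ⟨l, m, hl, hm, rfl⟩
    have hlm : 0 < l + m := by linarith
    refine ⟨m / (l + m), ⟨by positivity, by rw [div_lt_one hlm]; linarith⟩, ?_⟩
    have h1 : 1 - m / (l + m) = l / (l + m) := by field_simp; ring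
    have h2 : (1 - m / (l + m)) • p + (m / (l + m)) • q
        = (l + m)⁻¹ • (l • p + m • q) := by
      rw [h1, smul_add, smul_smul, smul_smul]
      rw [div_eq_inv_mul, div_eq_inv_mul]
    rw [gpt, h2, normSmul _ (by positivity) _]

-- ==== det3 algebra ====

lemma fin3_mk_two : (⟨2, by norm_num⟩ : Fin 3) = 2 := rfl

lemma det3_add₃ (p q x y : Pt) : det3 p q (x + y) = det3 p q x + det3 p q y := by
  simp only [det3, PiLp.add_apply]; ring

lemma det3_smul₃ (p q x : Pt) (c : ℝ) : det3 p q (c • x) = c * det3 p q x := by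
  simp only [det3, PiLp.smul_apply, smul_eq_mul]; ring

def Nmap (u v : Pt) : Pt →ₗ[ℝ] ℝ where
  toFun z := det3 u v z
  map_add' x y := det3_add₃ u v x y
  map_smul' c x := det3_smul₃ u v x c

lemma Nmap_apply (u v z : Pt) : Nmap u v z = det3 u v z := rfl

lemma det3_self₁ (u v : Pt) : det3 u v u = 0 := by simp only [det3]; ring

lemma det3_self₂ (u v : Pt) : det3 u v v = 0 := by simp only [det3]; ring

lemma cramer_id (a b c d : Pt) :
    det3 a b c • d = det3 d b c • a + det3 a d c • b + det3 a b d • c := by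
  ext i
  fin_cases i <;>
  · simp only [PiLp.add_apply, PiLp.smul_apply, smul_eq_mul, det3, Fin.mk_zero, Fin.mk_one,
      fin3_mk_two]
    ring

lemma span_of_det_ne {p q w : Pt} (hd : det3 p q w ≠ 0) (z : Pt) :
    ∃ c1 c2 c3 : ℝ, z = c1 • p + c2 • q + c3 • w := by
  have h := cramer_id p q w z
  refine ⟨det3 z q w / det3 p q w, det3 p z w / det3 p q w, det3 p q z / det3 p q w, ?_⟩
  have key : z = (det3 p q w)⁻¹ • (det3 z q w • p + det3 p z w • q + det3 p q z • w) := by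
    rw [← h, smul_smul, inv_mul_cancel₀ hd, one_smul]
  conv_lhs => rw [key]
  rw [smul_add, smul_add, smul_smul, smul_smul, smul_smul,
    div_eq_inv_mul, div_eq_inv_mul, div_eq_inv_mul]

lemma minors {p q : Pt} (h : LinIndep p q) :
    p 1 * q 2 - p 2 * q 1 ≠ 0 ∨ p 0 * q 2 - p 2 * q 0 ≠ 0 ∨ p 0 * q 1 - p 1 * q 0 ≠ 0 := by
  by_contra hc
  push_neg at hc
  obtain ⟨h0, h1, h2⟩ := hc
  by_cases hp : p 0 = 0 ∧ p 1 = 0 ∧ p 2 = 0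
  · have hp0 : p = 0 := by
      ext i; fin_cases i
      · exact hp.1
      · exact hp.2.1
      · exact hp.2.2
    have := (h 1 0 (by rw [hp0]; simp)).1
    norm_num at this
  · have key : ∃ i : Fin 3, p i ≠ 0 := by
      by_contra hno; push_neg at hno
      exact hp ⟨hno 0, hno 1, hno 2⟩
    obtain ⟨i, hi⟩ := key
    have hdep : (q i) • p + (-(p i)) • q = 0 := by
      ext j
      simp only [PiLp.add_apply, PiLp.smul_apply, smul_eq_mul, PiLp.zero_apply]
      fin_cases i <;> fin_cases j <;>
        simp only [Fin.mk_zero, Fin.mk_one, fin3_mk_two] <;>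
        first
          | ring1
          | linear_combination h0
          | linear_combination -h0
          | linear_combination h1
          | linear_combination -h1
          | linear_combination h2
          | linear_combination -h2
    have := (h _ _ hdep).2
    simp only [neg_eq_zero] at this
    exact hi this

lemma exists_det_ne {p q : Pt} (h : LinIndep p q) : ∃ m : Pt, det3 p q m ≠ 0 := by
  have e0 : det3 p q (EuclideanSpace.single 0 1) = p 1 * q 2 - p 2 * q 1 := by
    simp [det3, EuclideanSpace.single_apply, Fin.ext_iff]; try ring
  have e1 : det3 p q (EuclideanSpace.single 1 1) = -(p 0 * q 2 - p 2 * q 0) := by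
    simp [det3, EuclideanSpace.single_apply, Fin.ext_iff]; try ring
  have e2 : det3 p q (EuclideanSpace.single 2 1) = p 0 * q 1 - p 1 * q 0 := by
    simp [det3, EuclideanSpace.single_apply, Fin.ext_iff]; try ring
  rcases minors h with h' | h' | h'
  · exact ⟨_, e0 ▸ h'⟩
  · exact ⟨EuclideanSpace.single 1 1, by rw [e1]; exact neg_ne_zero.mpr h'⟩
  · exact ⟨_, e2 ▸ h'⟩

lemma det3_eq_zero_combo {p q w : Pt} (h : LinIndep p q) (hw : det3 p q w = 0) :
    ∃ s t : ℝ, w = s • p + t • q := by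
  obtain ⟨m, hm⟩ := exists_det_ne h
  obtain ⟨c1, c2, c3, hz⟩ := span_of_det_ne hm w
  have hdet : det3 p q w = c3 * det3 p q m := by
    rw [hz, det3_add₃, det3_add₃, det3_smul₃, det3_smul₃, det3_smul₃,
      det3_self₁, det3_self₂]
    ring
  rw [hw] at hdet
  have hc3 : c3 = 0 := by
    rcases mul_eq_zero.mp hdet.symm with h' | h'
    · exact h'
    · exact absurd h' hm
  rw [hc3, zero_smul, add_zero] at hz
  exact ⟨c1, c2, hz⟩

-- ==== arc basics ====

lemma arc_indep (a : Arc) : LinIndep a.p a.q :=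
  unit_indep a.unit_p a.unit_q a.ne a.ne_neg

lemma p_mem_carrier (a : Arc) : a.p ∈ a.carrier := by
  have h := gpt_mem_gseg a.p a.q (t := 0) (by constructor <;> norm_num)
  rwa [gpt_zero a.q a.unit_p] at h

lemma q_mem_carrier (a : Arc) : a.q ∈ a.carrier := by
  have h := gpt_mem_gseg a.p a.q (t := 1) (by constructor <;> norm_num)
  rwa [gpt_one a.p a.unit_q] at h

lemma N_combo (N : Pt →ₗ[ℝ] ℝ) (p q : Pt) (l m : ℝ) :
    N (‖l • p + m • q‖⁻¹ • (l • p + m • q)) = ‖l • p + m • q‖⁻¹ * (l * N p + m * N q) := by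
  rw [map_smul, map_add, map_smul, map_smul]
  simp [smul_eq_mul]

lemma norm_combo_pos {p q : Pt} (h : LinIndep p q) {l m : ℝ} (hlm : ¬(l = 0 ∧ m = 0)) :
    0 < ‖l • p + m • q‖ :=
  norm_pos_iff.mpr (combo_ne_zero h hlm)

lemma den_pos {A B t : ℝ} (hA : 0 < A) (hB : 0 < B) (h0 : 0 ≤ t) (h1 : t ≤ 1) :
    0 < (1 - t) * A + t * B := by
  rcases lt_or_ge t 1 with h | h
  · nlinarith
  · have : t = 1 := le_antisymm h1 h
    rw [this]; linarith

lemma den_neg {A B t : ℝ} (hA : A < 0) (hB : B < 0) (h0 : 0 ≤ t) (h1 : t ≤ 1) :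
    (1 - t) * A + t * B < 0 := by
  have := den_pos (A := -A) (B := -B) (by linarith) (by linarith) h0 h1
  linarith

lemma carrier_pos {N : Pt →ₗ[ℝ] ℝ} {a : Arc} (hp : 0 < N a.p) (hq : 0 < N a.q) :
    ∀ x ∈ a.carrier, 0 < N x := by
  intro x hx
  obtain ⟨l, m, hl, hm, hlm, rfl⟩ := mem_gseg_elim hx
  rw [N_combo]
  have h1 : 0 < ‖l • a.p + m • a.q‖ := norm_combo_pos (arc_indep a) hlm
  have h2 : 0 < l * N a.p + m * N a.q := by
    rcases (lt_or_ge 0 l) with h | h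
    · nlinarith
    · have hl0 : l = 0 := le_antisymm h hl
      have hm0 : 0 < m := hm.lt_of_ne fun h' => hlm ⟨hl0, h'.symm⟩
      nlinarith
  positivity

lemma carrier_neg {N : Pt →ₗ[ℝ] ℝ} {a : Arc} (hp : N a.p < 0) (hq : N a.q < 0) :
    ∀ x ∈ a.carrier, N x < 0 := by
  intro x hx
  have := carrier_pos (N := -N) (a := a) (by simpa using hp) (by simpa using hq) x hx
  simpa using this

lemma carrier_zero {N : Pt →ₗ[ℝ] ℝ} {a : Arc} (hp : N a.p = 0) (hq : N a.q = 0) :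
    ∀ x ∈ a.carrier, N x = 0 := by
  intro x hx
  obtain ⟨l, m, hl, hm, hlm, rfl⟩ := mem_gseg_elim hx
  rw [N_combo, hp, hq]
  ring

lemma consist {N : Pt →ₗ[ℝ] ℝ} {a : Arc} (hne : ∀ x ∈ a.carrier, N x ≠ 0)
    (h : 0 < N a.p ∨ 0 < N a.q) : 0 < N a.p ∧ 0 < N a.q := by
  have hp0 : N a.p ≠ 0 := hne _ (p_mem_carrier a)
  have hq0 : N a.q ≠ 0 := hne _ (q_mem_carrier a)
  by_contra hc
  have hopp : (0 < N a.p ∧ N a.q < 0) ∨ (N a.p < 0 ∧ 0 < N a.q) := by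
    rcases h with h | h
    · left; exact ⟨h, by
        rcases lt_or_gt_of_ne hq0 with h' | h'
        · exact h'
        · exact absurd ⟨h, h'⟩ hc⟩
    · right; exact ⟨by
        rcases lt_or_gt_of_ne hp0 with h' | h'
        · exact h'
        · exact absurd ⟨h', h⟩ hc, h⟩
  set A := N a.p
  set B := N a.q
  have hAB : A - B ≠ 0 := by rcases hopp with ⟨h1, h2⟩ | ⟨h1, h2⟩ <;> [linarith; linarith]
  set t0 := A / (A - B) with ht0
  have hform : ∀ h1 : A - B ≠ 0, True := fun _ => trivial
  have ht0' : 0 ≤ t0 ∧ t0 ≤ 1 := by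
    rcases hopp with ⟨h1, h2⟩ | ⟨h1, h2⟩
    · constructor
      · rw [ht0]
        exact le_of_lt (div_pos h1 (by linarith))
      · rw [ht0, div_le_one (by linarith)]; linarith
    · have heq : t0 = (-A) / (B - A) := by
        rw [ht0, div_eq_div_iff hAB (by linarith : B - A ≠ 0)]; ring
      constructor
      · rw [heq]
        exact le_of_lt (div_pos (by linarith) (by linarith))
      · rw [heq, div_le_one (by linarith)]; linarith
  obtain ⟨ht00, ht01⟩ := ht0'
  have hmem : gpt a.p a.q t0 ∈ a.carrier := gpt_mem_gseg a.p a.q ⟨ht00, ht01⟩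
  have hval : N (gpt a.p a.q t0) = 0 := by
    rw [gpt, N_combo]
    have : (1 - t0) * A + t0 * B = 0 := by
      rw [ht0]; field_simp; ring
    rw [this, mul_zero]
  exact hne _ hmem hval

-- ==== ratio machinery ====

lemma ratio_eq (c : Arc) (N : Pt →ₗ[ℝ] ℝ) (t : ℝ) (i : Fin 3) :
    (gpt c.p c.q t) i / N (gpt c.p c.q t)
      = ((1 - t) * c.p i + t * c.q i) / ((1 - t) * N c.p + t * N c.q) := by
  have hlm : ¬(1 - t = 0 ∧ t = 0) := fun h => by
    have := h.1; have := h.2; linarith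
  have hy : (1 - t) • c.p + t • c.q ≠ 0 := combo_ne_zero (arc_indep c) hlm
  have hn : (0:ℝ) < ‖(1 - t) • c.p + t • c.q‖ := norm_pos_iff.mpr hy
  have hinv : (‖(1 - t) • c.p + t • c.q‖⁻¹ : ℝ) ≠ 0 := by positivity
  have h1 : (gpt c.p c.q t) i = ‖(1 - t) • c.p + t • c.q‖⁻¹ * ((1 - t) * c.p i + t * c.q i) := by
    simp only [gpt, PiLp.smul_apply, PiLp.add_apply, smul_eq_mul]
  have h2 : N (gpt c.p c.q t) = ‖(1 - t) • c.p + t • c.q‖⁻¹ * ((1 - t) * N c.p + t * N c.q) := by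
    rw [gpt, map_smul, map_add, map_smul, map_smul]
    simp [smul_eq_mul]
  rw [h1, h2, mul_div_mul_left _ _ hinv]

lemma rho_lt {A B pi qi t1 t2 : ℝ} (hA : 0 < A) (hB : 0 < B)
    (h10 : 0 ≤ t1) (h11 : t1 ≤ 1) (h20 : 0 ≤ t2) (h21 : t2 ≤ 1)
    (hkey : 0 < (t2 - t1) * (qi * A - pi * B)) :
    ((1 - t1) * pi + t1 * qi) / ((1 - t1) * A + t1 * B)
      < ((1 - t2) * pi + t2 * qi) / ((1 - t2) * A + t2 * B) := by
  have hd1 : 0 < (1 - t1) * A + t1 * B := den_pos hA hB h10 h11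
  have hd2 : 0 < (1 - t2) * A + t2 * B := den_pos hA hB h20 h21
  rw [div_lt_div_iff₀ hd1 hd2]
  nlinarith [hkey]

lemma rho_eq {A B pi qi t1 t2 : ℝ} (hA : 0 < A) (hB : 0 < B)
    (h10 : 0 ≤ t1) (h11 : t1 ≤ 1) (h20 : 0 ≤ t2) (h21 : t2 ≤ 1)
    (hkey : qi * A - pi * B = 0) :
    ((1 - t1) * pi + t1 * qi) / ((1 - t1) * A + t1 * B)
      = ((1 - t2) * pi + t2 * qi) / ((1 - t2) * A + t2 * B) := by
  have hd1 : 0 < (1 - t1) * A + t1 * B := den_pos hA hB h10 h11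
  have hd2 : 0 < (1 - t2) * A + t2 * B := den_pos hA hB h20 h21
  rw [div_eq_div_iff hd1.ne' hd2.ne']
  nlinarith [hkey]

-- ==== the extremal lemma ====

lemma keyPos (D : Set Arc) (hSD : IsSD D) (N : Pt →ₗ[ℝ] ℝ)
    (hcross : ∀ a ∈ D, (N a.p = 0 ∧ N a.q = 0) ∨ ∀ x ∈ a.carrier, N x ≠ 0) :
    ∀ a ∈ D, N a.p ≤ 0 ∧ N a.q ≤ 0 := by
  obtain ⟨hfin, hne, hdisj, hblock⟩ := hSD
  by_contra hcon
  push_neg at hcon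
  obtain ⟨a₀, ha₀D, ha₀⟩ := hcon
  have hpos : 0 < N a₀.p ∨ 0 < N a₀.q := by
    rcases le_or_gt (N a₀.p) 0 with h | h
    · exact Or.inr (ha₀ h)
    · exact Or.inl h
  have ha₀ne : ∀ x ∈ a₀.carrier, N x ≠ 0 := by
    rcases hcross a₀ ha₀D with ⟨h1, h2⟩ | h
    · exfalso; rcases hpos with h | h
      · rw [h1] at h; exact lt_irrefl 0 h
      · rw [h2] at h; exact lt_irrefl 0 h
    · exact h
  have ha₀pq := consist ha₀ne hpos
  classical
  set F : Finset Arc := hfin.toFinset.filter (fun a => 0 < N a.p ∧ 0 < N a.q) with hF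
  have hmemF : ∀ {a : Arc}, a ∈ F ↔ a ∈ D ∧ (0 < N a.p ∧ 0 < N a.q) := by
    intro a
    rw [hF, Finset.mem_filter, Set.Finite.mem_toFinset]
  set E : Finset Pt := F.image (fun a => a.p) ∪ F.image (fun a => a.q) with hE
  have hEne : E.Nonempty := by
    refine ⟨a₀.p, ?_⟩
    rw [hE]
    exact Finset.mem_union_left _ (Finset.mem_image_of_mem _ (hmemF.mpr ⟨ha₀D, ha₀pq⟩))
  set Ψ : Pt → Lex (ℝ × Lex (ℝ × ℝ)) :=
    fun x => toLex (x 0 / N x, toLex (x 1 / N x, x 2 / N x)) with hΨ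
  obtain ⟨x0, hx0E, hmin⟩ := E.exists_min_image Ψ hEne
  -- x0 is an endpoint of an arc of F
  have hx0ep : ∃ b, b ∈ D ∧ (0 < N b.p ∧ 0 < N b.q) ∧ x0 ∈ b.endpoints ∧ 0 < N x0 := by
    rw [hE] at hx0E
    rcases Finset.mem_union.mp hx0E with h | h
    · obtain ⟨b, hbF, hbx⟩ := Finset.mem_image.mp h
      obtain ⟨hbD, hbpq⟩ := hmemF.mp hbF
      exact ⟨b, hbD, hbpq, by rw [← hbx]; exact Set.mem_insert _ _, by rw [← hbx]; exact hbpq.1⟩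
    · obtain ⟨b, hbF, hbx⟩ := Finset.mem_image.mp h
      obtain ⟨hbD, hbpq⟩ := hmemF.mp hbF
      exact ⟨b, hbD, hbpq, by rw [← hbx]; exact Set.mem_insert_of_mem _ rfl, by
        rw [← hbx]; exact hbpq.2⟩
  obtain ⟨b, hbD, hbpq, hx0ep, hNx0⟩ := hx0ep
  obtain ⟨c, hcD, hrel⟩ := hblock b hbD x0 hx0ep
  have hx0carr : x0 ∈ c.carrier := gsegInt_subset c.p c.q hrel
  have hcne : ∀ x ∈ c.carrier, N x ≠ 0 := by
    rcases hcross c hcD with ⟨h1, h2⟩ | h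
    · exact absurd (carrier_zero h1 h2 x0 hx0carr) hNx0.ne'
    · exact h
  have hcp : 0 < N c.p ∧ 0 < N c.q := by
    apply consist hcne
    by_contra hno
    push_neg at hno
    have hp' : N c.p < 0 :=
      lt_of_le_of_ne hno.1 (hcne _ (p_mem_carrier c))
    have hq' : N c.q < 0 :=
      lt_of_le_of_ne hno.2 (hcne _ (q_mem_carrier c))
    exact absurd (carrier_neg hp' hq' x0 hx0carr) (not_lt.mpr hNx0.le)
  obtain ⟨t0, ht0, hx0g⟩ := hrel
  have ht00 : (0:ℝ) < t0 := ht0.1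
  have ht01 : t0 < 1 := ht0.2
  set A := N c.p with hA
  set B := N c.q with hB
  set Δ : Fin 3 → ℝ := fun i => c.q i * A - c.p i * B with hΔdef
  have hΔs : ¬(Δ 0 = 0 ∧ Δ 1 = 0 ∧ Δ 2 = 0) := by
    rintro ⟨h0, h1, h2⟩
    simp only [hΔdef] at h0 h1 h2
    have hdep : (-B) • c.p + A • c.q = 0 := by
      ext j
      simp only [PiLp.add_apply, PiLp.smul_apply, smul_eq_mul, PiLp.zero_apply]
      fin_cases j <;> simp only [Fin.mk_zero, Fin.mk_one, fin3_mk_two] <;> linarith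
    exact hcp.1.ne' ((arc_indep c _ _ hdep).2)
  set ρ : Fin 3 → ℝ → ℝ :=
    fun i t => ((1 - t) * c.p i + t * c.q i) / ((1 - t) * A + t * B) with hρ
  have hrat : ∀ i, x0 i / N x0 = ρ i t0 := by
    intro i
    rw [← hx0g]
    exact ratio_eq c N t0 i
  have hratp : ∀ i, c.p i / N c.p = ρ i 0 := by
    intro i; rw [hρ]; norm_num; rfl
  have hratq : ∀ i, c.q i / N c.q = ρ i 1 := by
    intro i; rw [hρ]; norm_num; rfl
  -- comparison facts
  have hlt_p : ∀ i, 0 < Δ i → ρ i 0 < ρ i t0 := by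
    intro i hi
    simp only [hΔdef] at hi
    exact rho_lt hcp.1 hcp.2 le_rfl zero_le_one ht00.le ht01.le
      (by nlinarith [mul_pos ht00 hi])
  have hlt_q : ∀ i, Δ i < 0 → ρ i 1 < ρ i t0 := by
    intro i hi
    simp only [hΔdef] at hi
    have hkey : 0 < (1 - t0) * (-(c.q i * A - c.p i * B)) :=
      mul_pos (by linarith) (by linarith)
    exact rho_lt hcp.1 hcp.2 zero_le_one le_rfl ht00.le ht01.le (by nlinarith [hkey])
  have heq_t : ∀ i, Δ i = 0 → ∀ t1 t2 : ℝ, 0 ≤ t1 → t1 ≤ 1 → 0 ≤ t2 → t2 ≤ 1 →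
      ρ i t1 = ρ i t2 := by
    intro i hi t1 t2 a1 a2 a3 a4
    simp only [hΔdef] at hi
    exact rho_eq hcp.1 hcp.2 a1 a2 a3 a4 hi
  -- membership of endpoints of c in E
  have hcF : c ∈ F := hmemF.mpr ⟨hcD, hcp⟩
  have hcpE : c.p ∈ E := by
    rw [hE]; exact Finset.mem_union_left _ (Finset.mem_image_of_mem _ hcF)
  have hcqE : c.q ∈ E := by
    rw [hE]; exact Finset.mem_union_right _ (Finset.mem_image_of_mem _ hcF)
  -- construct a strictly smaller endpoint
  have hlex : ∃ y ∈ E, Ψ y < Ψ x0 := by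
    by_cases h0 : Δ 0 = 0
    · by_cases h1 : Δ 1 = 0
      · have h2 : Δ 2 ≠ 0 := fun h => hΔs ⟨h0, h1, h⟩
        rcases lt_or_gt_of_ne h2 with hs | hs
        · refine ⟨c.q, hcqE, ?_⟩
          rw [hΨ, Prod.Lex.lt_iff]; beta_reduce
          right
          refine ⟨by rw [hratq 0, hrat 0, heq_t 0 h0 1 t0 zero_le_one le_rfl ht00.le ht01.le]; rfl, ?_⟩
          rw [Prod.Lex.lt_iff]
          right
          exact ⟨by rw [hratq 1, hrat 1, heq_t 1 h1 1 t0 zero_le_one le_rfl ht00.le ht01.le]; rfl,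
            by rw [hratq 2, hrat 2]; exact hlt_q 2 hs⟩
        · refine ⟨c.p, hcpE, ?_⟩
          rw [hΨ, Prod.Lex.lt_iff]; beta_reduce
          right
          refine ⟨by rw [hratp 0, hrat 0, heq_t 0 h0 0 t0 le_rfl zero_le_one ht00.le ht01.le]; rfl, ?_⟩
          rw [Prod.Lex.lt_iff]
          right
          exact ⟨by rw [hratp 1, hrat 1, heq_t 1 h1 0 t0 le_rfl zero_le_one ht00.le ht01.le]; rfl,
            by rw [hratp 2, hrat 2]; exact hlt_p 2 hs⟩
      · rcases lt_or_gt_of_ne h1 with hs | hs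
        · refine ⟨c.q, hcqE, ?_⟩
          rw [hΨ, Prod.Lex.lt_iff]; beta_reduce
          right
          refine ⟨by rw [hratq 0, hrat 0, heq_t 0 h0 1 t0 zero_le_one le_rfl ht00.le ht01.le]; rfl, ?_⟩
          rw [Prod.Lex.lt_iff]
          left
          rw [hratq 1, hrat 1]
          exact hlt_q 1 hs
        · refine ⟨c.p, hcpE, ?_⟩
          rw [hΨ, Prod.Lex.lt_iff]; beta_reduce
          right
          refine ⟨by rw [hratp 0, hrat 0, heq_t 0 h0 0 t0 le_rfl zero_le_one ht00.le ht01.le]; rfl, ?_⟩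
          rw [Prod.Lex.lt_iff]
          left
          rw [hratp 1, hrat 1]
          exact hlt_p 1 hs
    · rcases lt_or_gt_of_ne h0 with hs | hs
      · refine ⟨c.q, hcqE, ?_⟩
        rw [hΨ, Prod.Lex.lt_iff]; beta_reduce
        left
        rw [hratq 0, hrat 0]
        exact hlt_q 0 hs
      · refine ⟨c.p, hcpE, ?_⟩
        rw [hΨ, Prod.Lex.lt_iff]; beta_reduce
        left
        rw [hratp 0, hrat 0]
        exact hlt_p 0 hs
  obtain ⟨y, hyE, hylt⟩ := hlex
  exact absurd (hmin y hyE) (not_le.mpr hylt)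

-- ==== arcs do not cross the great circle of the poles ====

lemma norm_carrier {a : Arc} {x : Pt} (hx : x ∈ a.carrier) : ‖x‖ = 1 := by
  obtain ⟨l, m, hl, hm, hlm, rfl⟩ := mem_gseg_elim hx
  have hy : l • a.p + m • a.q ≠ 0 := combo_ne_zero (arc_indep a) hlm
  have h1 : ‖l • a.p + m • a.q‖ ≠ 0 := norm_ne_zero_iff.mpr hy
  rw [norm_smul, Real.norm_eq_abs, abs_inv, abs_of_nonneg (norm_nonneg _),
    inv_mul_cancel₀ h1]

lemma no_cross (N : Pt →ₗ[ℝ] ℝ) (a : Arc) (w : Pt)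
    (hwu : ‖w‖ = 1) (hdet : det3 a.p a.q w = 0)
    (hw1 : w ∉ a.carrier) (hw2 : -w ∉ a.carrier) (hNw : N w = 0)
    (hnz : ¬(N a.p = 0 ∧ N a.q = 0)) :
    ∀ x ∈ a.carrier, N x ≠ 0 := by
  intro x hx hNx
  have hxu : ‖x‖ = 1 := norm_carrier hx
  obtain ⟨l, m, hl, hm, hlm, hxy⟩ := mem_gseg_elim hx
  set y := l • a.p + m • a.q with hy
  have hy0 : y ≠ 0 := combo_ne_zero (arc_indep a) hlm
  have hnorm : (0:ℝ) < ‖y‖ := norm_pos_iff.mpr hy0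
  have hxc : l * N a.p + m * N a.q = 0 := by
    rw [hxy, N_combo] at hNx
    rcases mul_eq_zero.mp hNx with h' | h'
    · exact absurd h' (by positivity)
    · exact h'
  obtain ⟨s, t, hw⟩ := det3_eq_zero_combo (arc_indep a) hdet
  have hNw' : s * N a.p + t * N a.q = 0 := by
    rw [hw, map_add, map_smul, map_smul] at hNw
    simpa [smul_eq_mul] using hNw
  have hst : ¬(s = 0 ∧ t = 0) := by
    rintro ⟨rfl, rfl⟩
    rw [zero_smul, zero_smul, add_zero] at hw
    rw [hw] at hwu
    simp at hwu
  have hkey1 : (l * t - m * s) * N a.p = 0 := by linear_combination t * hxc - m * hNw'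
  have hkey2 : (l * t - m * s) * N a.q = 0 := by linear_combination (-s) * hxc + l * hNw'
  have hlm2 : l * t - m * s = 0 := by
    by_cases hNp : N a.p = 0
    · have hNq : N a.q ≠ 0 := fun h => hnz ⟨hNp, h⟩
      rcases mul_eq_zero.mp hkey2 with h' | h'
      · exact h'
      · exact absurd h' hNq
    · rcases mul_eq_zero.mp hkey1 with h' | h'
      · exact h'
      · exact absurd h' hNp
  -- y is parallel to w
  have hpar : ∃ k : ℝ, y = k • w := by
    by_cases hs : s = 0
    · have ht : t ≠ 0 := fun h => hst ⟨hs, h⟩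
      have hl0 : l = 0 := by
        have : l * t = 0 := by rw [hs] at hlm2; linarith [hlm2]
        rcases mul_eq_zero.mp this with h' | h'
        · exact h'
        · exact absurd h' ht
      refine ⟨m / t, ?_⟩
      rw [hy, hw, hl0, hs]
      simp only [zero_smul, zero_add, smul_smul]
      congr 1
      field_simp
    · refine ⟨l / s, ?_⟩
      have h1 : l / s * s = l := by field_simp
      have h2 : l / s * t = m := by
        rw [div_mul_eq_mul_div, div_eq_iff hs]
        linarith [hlm2]
      rw [hy, hw, smul_add, smul_smul, smul_smul, h1, h2]
  obtain ⟨k, hk⟩ := hpar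
  have hxw : x = (‖y‖⁻¹ * k) • w := by
    rw [hxy, hk, smul_smul]
  have habs : |‖y‖⁻¹ * k| = 1 := by
    have := congrArg norm hxw
    rw [hxu, norm_smul, Real.norm_eq_abs, hwu, mul_one] at this
    exact this.symm
  rcases (abs_eq (by norm_num : (0:ℝ) ≤ 1)).mp habs with h' | h'
  · rw [h', one_smul] at hxw
    exact hw1 (hxw ▸ hx)
  · rw [h', neg_one_smul] at hxw
    exact hw2 (by rw [← hxw]; exact hx)

-- ==== pole pair selection ====

lemma pole_pair {D : Set Arc} (hor : IsKOriented 1 D ∨ IsKOriented 2 D) :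
    ∃ u v : Pt, LinIndep u v ∧ ∃ f : Arc → Pt,
      ∀ a ∈ D, ‖f a‖ = 1 ∧ (f a = u ∨ f a = v) ∧ det3 a.p a.q (f a) = 0 ∧
        f a ∉ a.carrier ∧ -f a ∉ a.carrier := by
  have he0 : ‖(EuclideanSpace.single 0 1 : Pt)‖ = 1 := by
    rw [EuclideanSpace.norm_single]; norm_num
  have he1 : ‖(EuclideanSpace.single 1 1 : Pt)‖ = 1 := by
    rw [EuclideanSpace.norm_single]; norm_num
  rcases hor with ⟨P, f, hcard, hP1, hP2, horr⟩ | ⟨P, f, hcard, hP1, hP2, horr⟩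
  · obtain ⟨u, hu⟩ := Finset.card_eq_one.mp hcard
    have huP : u ∈ P := by rw [hu]; exact Finset.mem_singleton_self u
    have hunorm : ‖u‖ = 1 := hP1 u huP
    have hfa : ∀ a ∈ D, f a = u := by
      intro a haD
      have := (horr a haD).1
      rw [hu, Finset.mem_singleton] at this
      exact this
    by_cases hcase : u ≠ EuclideanSpace.single 0 1 ∧ u ≠ -EuclideanSpace.single 0 1
    · refine ⟨u, EuclideanSpace.single 0 1, unit_indep hunorm he0 hcase.1 hcase.2, f, ?_⟩
      intro a haD
      obtain ⟨_, hdet, hw1, hw2⟩ := horr a haD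
      exact ⟨by rw [hfa a haD]; exact hunorm, Or.inl (hfa a haD), hdet, hw1, hw2⟩
    · have hu0 : u = EuclideanSpace.single 0 1 ∨ u = -EuclideanSpace.single 0 1 := by
        by_contra hno
        push_neg at hno
        exact hcase ⟨hno.1, hno.2⟩
      have hne1 : u ≠ EuclideanSpace.single 1 1 := by
        intro h
        have h0 : u 0 = 0 := by rw [h, EuclideanSpace.single_apply]; norm_num
        rcases hu0 with h' | h'
        · rw [h', EuclideanSpace.single_apply] at h0; norm_num at h0
        · rw [h', PiLp.neg_apply, EuclideanSpace.single_apply] at h0; norm_num at h0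
      have hne1' : u ≠ -EuclideanSpace.single 1 1 := by
        intro h
        have h0 : u 0 = 0 := by rw [h, PiLp.neg_apply, EuclideanSpace.single_apply]; norm_num
        rcases hu0 with h' | h'
        · rw [h', EuclideanSpace.single_apply] at h0; norm_num at h0
        · rw [h', PiLp.neg_apply, EuclideanSpace.single_apply] at h0; norm_num at h0
      refine ⟨u, EuclideanSpace.single 1 1, unit_indep hunorm he1 hne1 hne1', f, ?_⟩
      intro a haD
      obtain ⟨_, hdet, hw1, hw2⟩ := horr a haD
      exact ⟨by rw [hfa a haD]; exact hunorm, Or.inl (hfa a haD), hdet, hw1, hw2⟩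
  · obtain ⟨u, v, huv, hP⟩ := Finset.card_eq_two.mp hcard
    have huP : u ∈ P := by rw [hP]; exact Finset.mem_insert_self u {v}
    have hvP : v ∈ P := by rw [hP]; exact Finset.mem_insert_of_mem (Finset.mem_singleton_self v)
    refine ⟨u, v, unit_indep (hP1 u huP) (hP1 v hvP) huv (hP2 u huP v hvP), f, ?_⟩
    intro a haD
    obtain ⟨hmem, hdet, hw1, hw2⟩ := horr a haD
    have hfuv : f a = u ∨ f a = v := by
      rw [hP, Finset.mem_insert, Finset.mem_singleton] at hmem
      exact hmem
    exact ⟨hP1 _ hmem, hfuv, hdet, hw1, hw2⟩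


set_option maxHeartbeats 2000000 in
/-- There are no 1-oriented and no 2-oriented Spherical Diagrams. -/
theorem statement_8 :
    ¬ ∃ D : Set Arc, IsSD D ∧ (IsKOriented 1 D ∨ IsKOriented 2 D) := by
  rintro ⟨D, hSD, hor⟩
  obtain ⟨u, v, hindep, f, hf⟩ := pole_pair hor
  set N := Nmap u v with hN
  have hNu : N u = 0 := det3_self₁ u v
  have hNv : N v = 0 := det3_self₂ u v
  have hcross : ∀ a ∈ D, (N a.p = 0 ∧ N a.q = 0) ∨ ∀ x ∈ a.carrier, N x ≠ 0 := by
    intro a haD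
    by_cases h : N a.p = 0 ∧ N a.q = 0
    · exact Or.inl h
    · right
      obtain ⟨hfu, hfuv, hdet, hw1, hw2⟩ := hf a haD
      have hNw : N (f a) = 0 := by
        rcases hfuv with h' | h' <;> rw [h']
        · exact hNu
        · exact hNv
      exact no_cross N a (f a) hfu hdet hw1 hw2 hNw h
  have hcross' : ∀ a ∈ D, ((-N) a.p = 0 ∧ (-N) a.q = 0) ∨ ∀ x ∈ a.carrier, (-N) x ≠ 0 := by
    intro a haD
    rcases hcross a haD with ⟨h1, h2⟩ | h
    · left
      simp [h1, h2]
    · right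
      intro x hx
      simpa using h x hx
  have hle := keyPos D hSD N hcross
  have hge := keyPos D hSD (-N) hcross'
  have hG : ∀ a ∈ D, N a.p = 0 ∧ N a.q = 0 := by
    intro a haD
    have h1 := hle a haD
    have h2 := hge a haD
    simp only [LinearMap.neg_apply, neg_nonpos, Left.neg_nonpos_iff] at h2
    exact ⟨le_antisymm h1.1 h2.1, le_antisymm h1.2 h2.2⟩
  obtain ⟨hfin, hne, hdisj, hblock⟩ := hSD
  obtain ⟨a, haD⟩ := hne
  obtain ⟨b, hbD, hpb⟩ := hblock a haD a.p (Set.mem_insert _ _)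
  obtain ⟨l, m, hl, hm, hap⟩ := (mem_gsegInt_iff a.p).mp hpb
  set y : Pt := l • b.p + m • b.q with hy
  have hy0 : y ≠ 0 := combo_ne_zero (arc_indep b) (fun h => by
    have := h.1; have := h.2
    exact absurd this.symm (by linarith [hm]))
  set c0 : ℝ := ‖y‖⁻¹ with hc0def
  have hc0 : 0 < c0 := by
    rw [hc0def]
    have : (0:ℝ) < ‖y‖ := norm_pos_iff.mpr hy0
    positivity
  have hap' : a.p = (c0 * l) • b.p + (c0 * m) • b.q := by
    rw [hap, hy, smul_add, smul_smul, smul_smul]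
  have hab : a ≠ b := by
    rintro rfl
    have hzero : (c0 * l - 1) • a.p + (c0 * m) • a.q = 0 := by
      linear_combination (norm := module) -hap'
    have := (arc_indep a _ _ hzero).2
    nlinarith [hc0, hm]
  obtain ⟨m1, hm1⟩ := exists_det_ne hindep
  obtain ⟨m2, hm2⟩ := exists_det_ne (arc_indep b)
  have hNbp : N b.p = 0 := (hG b hbD).1
  have hNbq : N b.q = 0 := (hG b hbD).2
  have hNm2 : N m2 ≠ 0 := by
    intro h0
    obtain ⟨c1, c2, c3, hz⟩ := span_of_det_ne hm2 m1
    have : N m1 = 0 := by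
      rw [hz, map_add, map_add, map_smul, map_smul, map_smul, hNbp, hNbq, h0]
      simp
    exact hm1 this
  obtain ⟨c1, c2, c3, haq⟩ := span_of_det_ne hm2 a.q
  have hc3 : c3 = 0 := by
    have h0 : N a.q = 0 := (hG a haD).2
    rw [haq, map_add, map_add, map_smul, map_smul, map_smul, hNbp, hNbq] at h0
    simp only [smul_eq_mul, mul_zero, zero_add] at h0
    rcases mul_eq_zero.mp h0 with h' | h'
    · exact h'
    · exact absurd h' hNm2
  rw [hc3, zero_smul, add_zero] at haq
  obtain ⟨ε1, hε1, hε1'⟩ := exists_pos_mul_lt (mul_pos hc0 hl) |c1|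
  obtain ⟨ε2, hε2, hε2'⟩ := exists_pos_mul_lt (mul_pos hc0 hm) |c2|
  set ε : ℝ := min ε1 ε2 with hεdef
  have hε : 0 < ε := lt_min hε1 hε2
  have hcoef1 : 0 < c0 * l + ε * c1 := by
    have h1 : ε * |c1| ≤ ε1 * |c1| :=
      mul_le_mul_of_nonneg_right (min_le_left _ _) (abs_nonneg c1)
    have h2 : ε * c1 ≥ -(ε * |c1|) := by
      have := neg_abs_le c1
      nlinarith [hε.le]
    nlinarith [hε1', h1, h2]
  have hcoef2 : 0 < c0 * m + ε * c2 := by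
    have h1 : ε * |c2| ≤ ε2 * |c2| :=
      mul_le_mul_of_nonneg_right (min_le_right _ _) (abs_nonneg c2)
    have h2 : ε * c2 ≥ -(ε * |c2|) := by
      have := neg_abs_le c2
      nlinarith [hε.le]
    nlinarith [hε2', h1, h2]
  set zc : Pt := (1:ℝ) • a.p + ε • a.q with hzc
  set z : Pt := ‖zc‖⁻¹ • zc with hz
  have hza : z ∈ a.relint := by
    apply (mem_gsegInt_iff z).mpr
    exact ⟨1, ε, one_pos, hε, rfl⟩
  have hzb : z ∈ b.relint := by
    apply (mem_gsegInt_iff z).mpr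
    refine ⟨c0 * l + ε * c1, c0 * m + ε * c2, hcoef1, hcoef2, ?_⟩
    have hcomb : zc = (c0 * l + ε * c1) • b.p + (c0 * m + ε * c2) • b.q := by
      rw [hzc, hap', haq]
      module
    rw [hz, hcomb]
  have hzmem : z ∈ a.relint ∩ b.relint := ⟨hza, hzb⟩
  rw [hdisj a haD b hbD hab] at hzmem
  exact hzmem

end
end

section
/- The k poles of a k-oriented Spherical Diagram cannot all lie on a common great circle; consequently, every attractor hull of a k-oriented SD has non-empty interior. -/
open scoped RealInnerProductSpace
open scoped Classical

noncomputable section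

namespace Aux


lemma inner3 (x y : Pt) : ⟪x, y⟫ = x 0 * y 0 + x 1 * y 1 + x 2 * y 2 := by
  simp [PiLp.inner_apply, RCLike.inner_apply, Fin.sum_univ_three, mul_comm]

lemma normsq3 (x : Pt) : ‖x‖^2 = x 0^2 + x 1^2 + x 2^2 := by
  rw [← real_inner_self_eq_norm_sq, inner3]; ring

def cross (a b : Pt) : Pt :=
  WithLp.toLp 2 ![a 1 * b 2 - a 2 * b 1, a 2 * b 0 - a 0 * b 2, a 0 * b 1 - a 1 * b 0]

@[simp] lemma cross0 (a b : Pt) : cross a b 0 = a 1 * b 2 - a 2 * b 1 := by simp [cross]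
@[simp] lemma cross1 (a b : Pt) : cross a b 1 = a 2 * b 0 - a 0 * b 2 := by simp [cross]
@[simp] lemma cross2 (a b : Pt) : cross a b 2 = a 0 * b 1 - a 1 * b 0 := by simp [cross]

lemma inner_cross (x p q : Pt) : ⟪x, cross p q⟫ = det3 p q x := by
  rw [inner3]; simp [det3]; ring

lemma norm_cross_sq (p q : Pt) : ‖cross p q‖^2 = ‖p‖^2 * ‖q‖^2 - ⟪p, q⟫^2 := by
  rw [normsq3, normsq3, normsq3, inner3]; simp; ring

lemma bac_cab (a b c : Pt) : cross a (cross b c) = ⟪a, c⟫ • b - ⟪a, b⟫ • c := by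
  ext i
  rw [show ((⟪a, c⟫ • b - ⟪a, b⟫ • c : Pt) i) = ⟪a, c⟫ * b i - ⟪a, b⟫ * c i from rfl]
  rw [inner3, inner3]
  fin_cases i <;> simp <;> ring

lemma cross_antisymm (a b : Pt) : cross a b = - cross b a := by
  ext i
  rw [show ((-cross b a : Pt) i) = -(cross b a i) from rfl]
  fin_cases i <;> simp <;> ring

lemma cramer (p q r : Pt) :
    (‖cross p q‖^2) • r = (⟪r, p⟫ * ‖q‖^2 - ⟪r, q⟫ * ⟪p, q⟫) • p
      + (⟪r, q⟫ * ‖p‖^2 - ⟪r, p⟫ * ⟪p, q⟫) • q + ⟪r, cross p q⟫ • cross p q := by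
  ext i
  rw [show ∀ (α β γ : ℝ) (x y z : Pt), ((α • x + β • y + γ • z : Pt) i) = α * x i + β * y i + γ * z i from fun _ _ _ _ _ _ => rfl]
  rw [show ((‖cross p q‖^2 • r : Pt) i) = ‖cross p q‖^2 * r i from rfl]
  rw [norm_cross_sq, normsq3, normsq3, inner3, inner3, inner3, inner_cross]
  fin_cases i <;> simp [det3] <;> ring

-- strict bounds on inner product of distinct unit vectors
lemma inner_lt_one {p q : Pt} (hp : ‖p‖ = 1) (hq : ‖q‖ = 1) (h : p ≠ q) : ⟪p, q⟫ < 1 := by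
  have h1 : ‖p - q‖^2 = ‖p‖^2 - 2 * ⟪p, q⟫ + ‖q‖^2 := norm_sub_sq_real p q
  have h2 : (0:ℝ) < ‖p - q‖ := by
    rw [norm_pos_iff]; exact sub_ne_zero_of_ne h
  nlinarith
lemma neg_one_lt_inner {p q : Pt} (hp : ‖p‖ = 1) (hq : ‖q‖ = 1) (h : p ≠ -q) : -1 < ⟪p, q⟫ := by
  have h1 : ‖p + q‖^2 = ‖p‖^2 + 2 * ⟪p, q⟫ + ‖q‖^2 := norm_add_sq_real p q
  have h2 : (0:ℝ) < ‖p + q‖ := by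
    rw [norm_pos_iff]; intro h0; exact h (by rw [← sub_eq_zero]; simpa [sub_neg_eq_add] using h0)
  nlinarith

lemma normsq_pos_cross {p q : Pt} (hp : ‖p‖ = 1) (hq : ‖q‖ = 1) (h1 : p ≠ q) (h2 : p ≠ -q) :
    0 < ‖cross p q‖^2 := by
  rw [norm_cross_sq, hp, hq]
  have := inner_lt_one hp hq h1
  have := neg_one_lt_inner hp hq h2
  nlinarith

lemma parallel_of_cross_v_zero {v n : Pt} (hv : ‖v‖ = 1) (h0 : cross v n = 0)
    (hn2 : 0 < ‖n‖^2) : ∃ lam : ℝ, lam ≠ 0 ∧ n = lam • v := by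
  have hvv : ⟪v, v⟫ = (1:ℝ) := by rw [real_inner_self_eq_norm_sq, hv]; norm_num
  have hb : cross v (cross v n) = ⟪v, n⟫ • v - ⟪v, v⟫ • n := bac_cab v v n
  rw [h0] at hb
  have hc0 : cross v (0:Pt) = 0 := by ext i; fin_cases i <;> simp
  rw [hc0, hvv, one_smul] at hb
  have hneq : n = ⟪v, n⟫ • v := by
    have := hb.symm; rw [sub_eq_zero] at this; exact this.symm
  refine ⟨⟪v, n⟫, ?_, hneq⟩
  intro h
  rw [h, zero_smul] at hneq
  rw [hneq] at hn2
  simp at hn2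

/-- Two unit vectors orthogonal to both `v` and the plane of `p,q` agree up to sign,
provided `p,q` are not both orthogonal to `v`. -/
lemma pm_lemma {p q v x w : Pt} (hp : ‖p‖ = 1) (hq : ‖q‖ = 1) (hv : ‖v‖ = 1)
    (hx : ‖x‖ = 1) (hw : ‖w‖ = 1) (hpq : p ≠ q) (hpnq : p ≠ -q)
    (hne : ⟪v, p⟫ ≠ 0 ∨ ⟪v, q⟫ ≠ 0)
    (hxv : ⟪v, x⟫ = 0) (hwv : ⟪v, w⟫ = 0)
    (hxd : det3 p q x = 0) (hwd : det3 p q w = 0) : x = w ∨ x = -w := by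
  have hxv' : ⟪x, v⟫ = 0 := by rw [real_inner_comm]; exact hxv
  have hwv' : ⟪w, v⟫ = 0 := by rw [real_inner_comm]; exact hwv
  set n := cross p q with hn
  have hn2 : 0 < ‖n‖^2 := normsq_pos_cross hp hq hpq hpnq
  have hxn : ⟪x, n⟫ = 0 := by rw [hn, inner_cross]; exact hxd
  have hwn : ⟪w, n⟫ = 0 := by rw [hn, inner_cross]; exact hwd
  have hpn : ⟪p, n⟫ = 0 := by rw [hn, inner_cross]; simp [det3]; ring
  have hqn : ⟪q, n⟫ = 0 := by rw [hn, inner_cross]; simp [det3]; ring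
  set m := cross v n with hm
  have hmne : m ≠ 0 := by
    intro h0
    obtain ⟨lam, hlne, hL⟩ := parallel_of_cross_v_zero hv (hm ▸ h0) hn2
    have hp0 : ⟪v, p⟫ = 0 := by
      have h1 : ⟪p, n⟫ = lam * ⟪p, v⟫ := by rw [hL, real_inner_smul_right]
      rw [hpn] at h1
      have := (mul_eq_zero.mp h1.symm).resolve_left hlne
      rwa [real_inner_comm] at this
    have hq0 : ⟪v, q⟫ = 0 := by
      have h1 : ⟪q, n⟫ = lam * ⟪q, v⟫ := by rw [hL, real_inner_smul_right]
      rw [hqn] at h1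
      have := (mul_eq_zero.mp h1.symm).resolve_left hlne
      rwa [real_inner_comm] at this
    rcases hne with h | h
    · exact h hp0
    · exact h hq0
  have hmn : (0:ℝ) < ‖m‖ := norm_pos_iff.mpr hmne
  have hxm : cross x m = 0 := by
    rw [hm, bac_cab, hxn, hxv', zero_smul, zero_smul, sub_zero]
  have hwm : cross w m = 0 := by
    rw [hm, bac_cab, hwn, hwv', zero_smul, zero_smul, sub_zero]
  have hmx : cross m x = 0 := by rw [cross_antisymm, hxm]; simp
  have hmw : cross m w = 0 := by rw [cross_antisymm, hwm]; simp
  have key : ∀ z : Pt, cross m z = 0 → (‖m‖^2) • z = ⟪m, z⟫ • m := by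
    intro z hz
    have hb : cross m (cross m z) = ⟪m, z⟫ • m - ⟪m, m⟫ • z := bac_cab m m z
    rw [hz] at hb
    have hc0 : cross m (0:Pt) = 0 := by ext i; fin_cases i <;> simp
    rw [hc0] at hb
    rw [real_inner_self_eq_norm_sq] at hb
    have := hb.symm
    rw [sub_eq_zero] at this
    exact this.symm
  have hx' : (‖m‖^2) • x = ⟪m, x⟫ • m := key x hmx
  have hw' : (‖m‖^2) • w = ⟪m, w⟫ • m := key w hmw
  have habs : ∀ z : Pt, ‖z‖ = 1 → (‖m‖^2) • z = ⟪m, z⟫ • m → |⟪m, z⟫| = ‖m‖ := by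
    intro z hz hzz
    have h1 := congrArg (fun y : Pt => ‖y‖) hzz
    simp only [norm_smul, Real.norm_eq_abs, hz, mul_one] at h1
    rw [abs_of_nonneg (by positivity : (0:ℝ) ≤ ‖m‖^2)] at h1
    have h2 : |⟪m, z⟫| * ‖m‖ = ‖m‖ * ‖m‖ := by nlinarith
    exact mul_right_cancel₀ (ne_of_gt hmn) h2
  have hax := habs x hx hx'
  have haw := habs w hw hw'
  have hsq : ‖m‖^2 ≠ 0 := by positivity
  have hcase : ⟪m, x⟫ = ⟪m, w⟫ ∨ ⟪m, x⟫ = -⟪m, w⟫ := by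
    rcases abs_eq (norm_nonneg m) |>.mp hax with h1 | h1 <;>
    rcases abs_eq (norm_nonneg m) |>.mp haw with h2 | h2 <;>
      [left; right; right; left] <;> rw [h1, h2] <;> ring
  rcases hcase with h | h
  · left
    have : (‖m‖^2) • x = (‖m‖^2) • w := by rw [hx', hw', h]
    exact smul_right_injective Pt hsq this
  · right
    have : (‖m‖^2) • x = (‖m‖^2) • (-w) := by
      rw [hx', h, neg_smul, ← hw', smul_neg]
    exact smul_right_injective Pt hsq this

/-- If `p, q, r` all lie in the plane orthogonal to the unit vector `v`,
with `p, q` independent unit vectors, then `r` is a combination of `p` and `q`. -/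
lemma span2 {p q r v : Pt} (hp : ‖p‖ = 1) (hq : ‖q‖ = 1) (hv : ‖v‖ = 1)
    (hpq : p ≠ q) (hpnq : p ≠ -q)
    (hvp : ⟪v, p⟫ = 0) (hvq : ⟪v, q⟫ = 0) (hvr : ⟪v, r⟫ = 0) :
    ∃ γ δ : ℝ, r = γ • p + δ • q := by
  set n := cross p q with hn
  have hn2 : 0 < ‖n‖^2 := normsq_pos_cross hp hq hpq hpnq
  have hm0 : cross v n = 0 := by
    rw [hn, bac_cab, hvp, hvq, zero_smul, zero_smul, sub_zero]
  obtain ⟨lam, hlne, hL⟩ := parallel_of_cross_v_zero hv hm0 hn2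
  have hrv : ⟪r, v⟫ = 0 := by rw [real_inner_comm]; exact hvr
  have hrn : ⟪r, n⟫ = 0 := by
    rw [hL, real_inner_smul_right, hrv, mul_zero]
  have hC := cramer p q r
  rw [← hn, hrn] at hC
  have hCe : (‖n‖^2) • r = (⟪r, p⟫ * ‖q‖^2 - ⟪r, q⟫ * ⟪p, q⟫) • p
      + (⟪r, q⟫ * ‖p‖^2 - ⟪r, p⟫ * ⟪p, q⟫) • q := by
    rw [hC]; simp
  refine ⟨(‖n‖^2)⁻¹ * (⟪r, p⟫ * ‖q‖^2 - ⟪r, q⟫ * ⟪p, q⟫),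
          (‖n‖^2)⁻¹ * (⟪r, q⟫ * ‖p‖^2 - ⟪r, p⟫ * ⟪p, q⟫), ?_⟩
  have h2 := congrArg (fun y : Pt => (‖n‖^2)⁻¹ • y) hCe
  simp only [smul_smul, smul_add] at h2
  rw [inv_mul_cancel₀ (ne_of_gt hn2), one_smul] at h2
  exact h2



lemma comb_ne_zero {p q : Pt} (hp : ‖p‖ = 1) (hq : ‖q‖ = 1) (hpnq : p ≠ -q) {t : ℝ}
    (h0 : 0 ≤ t) (h1 : t ≤ 1) : (1 - t) • p + t • q ≠ 0 := by
  intro h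
  have h2 : (1 - t) • p = -(t • q) := by
    rw [← add_eq_zero_iff_eq_neg] at *; exact h
  have h3 := congrArg (fun y : Pt => ‖y‖) h2
  simp only [norm_smul, Real.norm_eq_abs, norm_neg, hp, hq, mul_one] at h3
  rw [abs_of_nonneg (by linarith), abs_of_nonneg h0] at h3
  have ht : t = 1/2 := by linarith
  rw [ht] at h2
  have : p = -q := by
    have := congrArg (fun y : Pt => (2:ℝ) • y) h2
    simp only [smul_smul, smul_neg] at this
    norm_num at this
    exact this
  exact hpnq this

lemma norm_comb_pos {p q : Pt} (hp : ‖p‖ = 1) (hq : ‖q‖ = 1) (hpnq : p ≠ -q) {t : ℝ}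
    (h0 : 0 ≤ t) (h1 : t ≤ 1) : 0 < ‖(1 - t) • p + t • q‖ :=
  norm_pos_iff.mpr (comb_ne_zero hp hq hpnq h0 h1)

lemma gpt_norm {p q : Pt} (hp : ‖p‖ = 1) (hq : ‖q‖ = 1) (hpnq : p ≠ -q) {t : ℝ}
    (h0 : 0 ≤ t) (h1 : t ≤ 1) : ‖gpt p q t‖ = 1 := by
  have := norm_comb_pos hp hq hpnq h0 h1
  rw [gpt, norm_smul, Real.norm_eq_abs, abs_of_pos (inv_pos.mpr this),
    inv_mul_cancel₀ (ne_of_gt this)]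

lemma gpt_zero {p : Pt} (q : Pt) (hp : ‖p‖ = 1) : gpt p q 0 = p := by
  rw [gpt]; simp [hp]

lemma gpt_one (p : Pt) {q : Pt} (hq : ‖q‖ = 1) : gpt p q 1 = q := by
  rw [gpt]; simp [hq]

lemma left_mem_gseg {p q : Pt} (hp : ‖p‖ = 1) : p ∈ gseg p q :=
  ⟨0, ⟨le_refl 0, zero_le_one⟩, gpt_zero q hp⟩

lemma right_mem_gseg {p q : Pt} (hq : ‖q‖ = 1) : q ∈ gseg p q :=
  ⟨1, ⟨zero_le_one, le_refl 1⟩, gpt_one p hq⟩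

lemma gsegInt_subset_gseg (p q : Pt) : gsegInt p q ⊆ gseg p q :=
  Set.image_mono Set.Ioo_subset_Icc_self

lemma inner_gpt (v p q : Pt) (t : ℝ) :
    ⟪v, gpt p q t⟫ = ‖(1 - t) • p + t • q‖⁻¹ * ((1 - t) * ⟪v, p⟫ + t * ⟪v, q⟫) := by
  rw [gpt, real_inner_smul_right, inner_add_right, real_inner_smul_right, real_inner_smul_right]

lemma det3_gpt (p q : Pt) (t : ℝ) : det3 p q (gpt p q t) = 0 := by
  have h : ∀ i, gpt p q t i = ‖(1 - t) • p + t • q‖⁻¹ * ((1 - t) * p i + t * q i) :=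
    fun _ => rfl
  simp only [det3, h]; ring

lemma norm_comb_lt_one {p q : Pt} (hp : ‖p‖ = 1) (hq : ‖q‖ = 1) (hpq : p ≠ q) {t : ℝ}
    (h0 : 0 < t) (h1 : t < 1) : ‖(1 - t) • p + t • q‖ < 1 := by
  have hin := inner_lt_one hp hq hpq
  have hup : ‖(1 - t) • p + t • q‖^2
      = (1 - t)^2 * ‖p‖^2 + 2 * ((1 - t) * t) * ⟪p, q⟫ + t^2 * ‖q‖^2 := by
    rw [normsq3, normsq3, normsq3, inner3]
    simp only [show ∀ i, ((1 - t) • p + t • q : Pt) i = (1 - t) * p i + t * q i from fun _ => rfl]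
    ring
  rw [hp, hq] at hup
  have h2 : ‖(1 - t) • p + t • q‖^2 < 1 := by nlinarith [mul_pos h0 (by linarith : (0:ℝ) < 1 - t)]
  nlinarith [norm_nonneg ((1 - t) • p + t • q)]

lemma mem_gsegInt_of_comb {p q : Pt} {α β : ℝ} (hα : 0 < α) (hβ : 0 < β) {x : Pt}
    (hx : ‖x‖ = 1) (hcomb : x = α • p + β • q) : x ∈ gsegInt p q := by
  have hs : (0:ℝ) < α + β := by linarith
  refine ⟨β / (α + β), ⟨by positivity, by rw [div_lt_one hs]; linarith⟩, ?_⟩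
  have e1 : 1 - β / (α + β) = (α + β)⁻¹ * α := by field_simp; ring
  have e2 : β / (α + β) = (α + β)⁻¹ * β := by field_simp
  have hu : (1 - β / (α + β)) • p + (β / (α + β)) • q = (α + β)⁻¹ • x := by
    rw [hcomb, smul_add, smul_smul, smul_smul, e1, e2]
  rw [gpt, hu, norm_smul, Real.norm_eq_abs, abs_of_pos (inv_pos.mpr hs), hx, mul_one,
    inv_inv, smul_smul, mul_inv_cancel₀ (ne_of_gt hs), one_smul]

lemma left_notin_gsegInt {p q : Pt} (hp : ‖p‖ = 1) (hq : ‖q‖ = 1) (hpq : p ≠ q)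
    (hpnq : p ≠ -q) : p ∉ gsegInt p q := by
  rintro ⟨t, ⟨ht0, ht1⟩, heq⟩
  set N := ‖(1 - t) • p + t • q‖ with hNdef
  have hN : 0 < N := norm_comb_pos hp hq hpnq ht0.le ht1.le
  have hu : (1 - t) • p + t • q = N • p := by
    have h2 := congrArg (fun y : Pt => N • y) heq
    simp only [gpt, smul_smul] at h2
    rw [mul_inv_cancel₀ (ne_of_gt hN), one_smul] at h2
    exact h2
  have h2 : t • q = (N - (1 - t)) • p := by
    rw [sub_smul, ← hu]; abel
  have h3 : q = (t⁻¹ * (N - (1 - t))) • p := by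
    have := congrArg (fun y : Pt => t⁻¹ • y) h2
    simp only [smul_smul] at this
    rwa [inv_mul_cancel₀ (ne_of_gt ht0), one_smul] at this
  have h4 := congrArg (fun y : Pt => ‖y‖) h3
  simp only [norm_smul, Real.norm_eq_abs, hp, hq, mul_one] at h4
  rcases (abs_eq (by norm_num : (0:ℝ) ≤ 1)).mp h4.symm with h5 | h5
  · rw [h5, one_smul] at h3; exact hpq h3.symm
  · rw [h5] at h3
    apply hpnq
    rw [h3, neg_smul, one_smul, neg_neg]


lemma mem_endpoints_left (a : Arc) : a.p ∈ a.endpoints := Set.mem_insert _ _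
lemma mem_endpoints_right (a : Arc) : a.q ∈ a.endpoints := Set.mem_insert_of_mem _ rfl

lemma endpoint_mem_carrier {a : Arc} {e : Pt} (he : e ∈ a.endpoints) : e ∈ a.carrier := by
  simp only [Arc.endpoints, Set.mem_insert_iff, Set.mem_singleton_iff] at he
  rcases he with rfl | rfl
  · exact left_mem_gseg a.unit_p
  · exact right_mem_gseg a.unit_q

lemma combo_pos {α β t : ℝ} (hα : 0 < α) (hβ : 0 < β) (h0 : 0 ≤ t) (h1 : t ≤ 1) :
    0 < (1 - t) * α + t * β := by
  rcases le_or_gt t (1/2) with h | h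
  · nlinarith [mul_nonneg (by linarith : (0:ℝ) ≤ 1/2 - t) hα.le, mul_nonneg h0 hβ.le]
  · nlinarith [mul_nonneg (by linarith : (0:ℝ) ≤ t - 1/2) hβ.le,
      mul_nonneg (sub_nonneg.2 h1) hα.le]

lemma combo_neg {α β t : ℝ} (hα : α < 0) (hβ : β < 0) (h0 : 0 ≤ t) (h1 : t ≤ 1) :
    (1 - t) * α + t * β < 0 := by
  have := combo_pos (neg_pos.mpr hα) (neg_pos.mpr hβ) h0 h1
  nlinarith

/-- Trichotomy: relative to a unit vector `v` orthogonal to the vanishing points of the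
arc `a`, the arc is entirely on the positive side, entirely on the negative side, or its
endpoints are both on the great circle orthogonal to `v`. -/
lemma trichotomy {v : Pt} (hv : ‖v‖ = 1) (a : Arc) {w : Pt} (hwu : ‖w‖ = 1)
    (hvw : ⟪v, w⟫ = 0) (hdet : det3 a.p a.q w = 0)
    (hw1 : w ∉ a.carrier) (hw2 : -w ∉ a.carrier) :
    (∀ x ∈ a.carrier, 0 < ⟪v, x⟫) ∨ (∀ x ∈ a.carrier, ⟪v, x⟫ < 0) ∨
      (⟪v, a.p⟫ = 0 ∧ ⟪v, a.q⟫ = 0) := by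
  have hp := a.unit_p; have hq := a.unit_q
  set α := ⟪v, a.p⟫ with hα'
  set β := ⟪v, a.q⟫ with hβ'
  have hkey : ∀ t : ℝ, 0 ≤ t → t ≤ 1 → (1 - t) * α + t * β = 0 → α = 0 ∧ β = 0 := by
    intro t ht0 ht1 hzero
    by_contra hab
    have hab' : α ≠ 0 ∨ β ≠ 0 := by tauto
    have hx₀u : ‖gpt a.p a.q t‖ = 1 := gpt_norm hp hq a.ne_neg ht0 ht1
    have hx₀v : ⟪v, gpt a.p a.q t⟫ = 0 := by
      rw [inner_gpt, ← hα', ← hβ', hzero, mul_zero]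
    have hx₀d : det3 a.p a.q (gpt a.p a.q t) = 0 := det3_gpt _ _ _
    have hmem : gpt a.p a.q t ∈ a.carrier := ⟨t, ⟨ht0, ht1⟩, rfl⟩
    rcases pm_lemma hp hq hv hx₀u hwu a.ne a.ne_neg hab' hx₀v hvw hx₀d hdet with h | h
    · exact hw1 (h ▸ hmem)
    · exact hw2 (h ▸ hmem)
  have hposc : 0 < α → 0 < β → ∀ x ∈ a.carrier, 0 < ⟪v, x⟫ := by
    rintro hα0 hβ0 x ⟨t, ⟨ht0, ht1⟩, rfl⟩
    rw [inner_gpt, ← hα', ← hβ']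
    have hN := norm_comb_pos hp hq a.ne_neg ht0 ht1
    exact mul_pos (inv_pos.mpr hN) (combo_pos hα0 hβ0 ht0 ht1)
  have hnegc : α < 0 → β < 0 → ∀ x ∈ a.carrier, ⟪v, x⟫ < 0 := by
    rintro hα0 hβ0 x ⟨t, ⟨ht0, ht1⟩, rfl⟩
    rw [inner_gpt, ← hα', ← hβ']
    have hN := norm_comb_pos hp hq a.ne_neg ht0 ht1
    exact mul_neg_of_pos_of_neg (inv_pos.mpr hN) (combo_neg hα0 hβ0 ht0 ht1)
  rcases lt_trichotomy α 0 with hA | hA | hA <;> rcases lt_trichotomy β 0 with hB | hB | hB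
  · exact Or.inr (Or.inl (hnegc hA hB))
  · exact absurd (hkey 1 zero_le_one le_rfl (by rw [hB]; ring)).1 (ne_of_lt hA)
  · -- α < 0 < β
    exfalso
    have hden : (0:ℝ) < β - α := by linarith
    have hc : (-α) / (β - α) * (β - α) = -α := div_mul_cancel₀ _ (ne_of_gt hden)
    have := (hkey ((-α) / (β - α)) (le_of_lt (div_pos (by linarith) hden))
      (by rw [div_le_one hden]; linarith) (by linear_combination hc)).1
    exact (ne_of_lt hA) this
  · exact absurd (hkey 0 le_rfl zero_le_one (by rw [hA]; ring)).2 (ne_of_lt hB)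
  · exact Or.inr (Or.inr ⟨hA, hB⟩)
  · exact absurd (hkey 0 le_rfl zero_le_one (by rw [hA]; ring)).2 (ne_of_gt hB)
  · -- β < 0 < α
    exfalso
    have hden : (0:ℝ) < α - β := by linarith
    have hc : α / (α - β) * (α - β) = α := div_mul_cancel₀ _ (ne_of_gt hden)
    have := (hkey (α / (α - β)) (le_of_lt (div_pos hA hden))
      (by rw [div_le_one hden]; linarith) (by linear_combination -hc)).1
    exact (ne_of_gt hA) this
  · exact absurd (hkey 1 zero_le_one le_rfl (by rw [hB]; ring)).1 (ne_of_gt hA)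
  · exact Or.inl (hposc hA hB)

/-- In an SD there is no arc lying entirely on the open positive side of `v`. -/
lemma noPos (D : Set Arc) (hD : IsSD D) (v : Pt)
    (htri : ∀ a ∈ D, (∀ x ∈ a.carrier, 0 < ⟪v, x⟫) ∨ (∀ x ∈ a.carrier, ⟪v, x⟫ < 0) ∨
      (⟪v, a.p⟫ = 0 ∧ ⟪v, a.q⟫ = 0)) :
    ∀ a ∈ D, ¬(∀ x ∈ a.carrier, 0 < ⟪v, x⟫) := by
  intro a₀ ha₀ hPos
  classical
  set val : Arc → ℝ := fun a => min ⟪v, a.p⟫ ⟪v, a.q⟫ with hval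
  set T : Finset Arc := hD.1.toFinset.filter (fun a => ∀ x ∈ a.carrier, 0 < ⟪v, x⟫) with hT
  have ha₀T : a₀ ∈ T := Finset.mem_filter.mpr ⟨hD.1.mem_toFinset.mpr ha₀, hPos⟩
  obtain ⟨b, hbT, hbmin⟩ := T.exists_min_image val ⟨a₀, ha₀T⟩
  have hbD : b ∈ D := hD.1.mem_toFinset.mp (Finset.mem_filter.mp hbT).1
  have hbPos : ∀ x ∈ b.carrier, 0 < ⟪v, x⟫ := (Finset.mem_filter.mp hbT).2
  obtain ⟨e, hee, heval⟩ : ∃ e, e ∈ b.endpoints ∧ ⟪v, e⟫ = val b := by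
    rcases le_total ⟪v, b.p⟫ ⟪v, b.q⟫ with h | h
    · exact ⟨b.p, mem_endpoints_left b, by rw [hval]; exact (min_eq_left h).symm⟩
    · exact ⟨b.q, mem_endpoints_right b, by rw [hval]; exact (min_eq_right h).symm⟩
  have hmpos : 0 < val b := heval ▸ hbPos e (endpoint_mem_carrier hee)
  obtain ⟨c, hcD, hec⟩ := hD.2.2.2 b hbD e hee
  obtain ⟨t, ⟨ht0, ht1⟩, heq⟩ := hec
  have hcPos : ∀ x ∈ c.carrier, 0 < ⟪v, x⟫ := by
    rcases htri c hcD with h | h | h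
    · exact h
    · exfalso
      have h2 := h e (gsegInt_subset_gseg _ _ ⟨t, ⟨ht0, ht1⟩, heq⟩)
      rw [heval] at h2; linarith
    · exfalso
      have h2 : ⟪v, e⟫ = 0 := by rw [← heq, inner_gpt, h.1, h.2]; ring
      rw [heval] at h2; linarith
  have hcT : c ∈ T := Finset.mem_filter.mpr ⟨hD.1.mem_toFinset.mpr hcD, hcPos⟩
  have hcval : val b ≤ val c := hbmin c hcT
  have hNlt : ‖(1 - t) • c.p + t • c.q‖ < 1 := norm_comb_lt_one c.unit_p c.unit_q c.ne ht0 ht1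
  have hNpos : 0 < ‖(1 - t) • c.p + t • c.q‖ :=
    norm_comb_pos c.unit_p c.unit_q c.ne_neg ht0.le ht1.le
  have hg : val c ≤ (1 - t) * ⟪v, c.p⟫ + t * ⟪v, c.q⟫ := by
    have h1 : val c ≤ ⟪v, c.p⟫ := min_le_left _ _
    have h2 : val c ≤ ⟪v, c.q⟫ := min_le_right _ _
    nlinarith
  have hinv : 1 < (‖(1 - t) • c.p + t • c.q‖)⁻¹ := (one_lt_inv₀ hNpos).mpr hNlt
  have hmain : val b < ⟪v, e⟫ := by
    rw [← heq, inner_gpt]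
    have hgpos : 0 < (1 - t) * ⟪v, c.p⟫ + t * ⟪v, c.q⟫ := by
      calc (0:ℝ) < val b := hmpos
      _ ≤ val c := hcval
      _ ≤ _ := hg
    calc val b ≤ val c := hcval
    _ ≤ (1 - t) * ⟪v, c.p⟫ + t * ⟪v, c.q⟫ := hg
    _ < _ := by nlinarith
  rw [heval] at hmain; exact lt_irrefl _ hmain

end Aux

set_option maxHeartbeats 2000000 in
/-- The k poles of a k-oriented SD cannot all lie on a common great
circle; consequently every attractor hull has non-empty interior. -/
theorem statement_12 (D : Set Arc) (hD : IsSD D) (k : ℕ) (P : Finset Pt) (f : Arc → Pt)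
    (hcard : P.card = k) (hor : OrientedBy D P f) :
    (¬ ∃ C : Set Pt, IsGreatCircle C ∧ (P : Set Pt) ⊆ C) ∧
    (∀ A : Set Pt, IsAttractor P A → (sphInterior (sphericalHull A)).Nonempty) := by
  have hunit : ∀ p ∈ P, ‖p‖ = 1 := hor.1
  have part1 : ¬ ∃ C : Set Pt, IsGreatCircle C ∧ (P : Set Pt) ⊆ C := by
    rintro ⟨C, ⟨v, hv, rfl⟩, hPC⟩
    have htri : ∀ u : Pt, ‖u‖ = 1 → (∀ p ∈ P, ⟪u, p⟫ = 0) → ∀ a ∈ D,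
        (∀ x ∈ a.carrier, 0 < ⟪u, x⟫) ∨ (∀ x ∈ a.carrier, ⟪u, x⟫ < 0) ∨
          (⟪u, a.p⟫ = 0 ∧ ⟪u, a.q⟫ = 0) := by
      intro u hu hup a haD
      obtain ⟨hfP, hdet, hf1, hf2⟩ := hor.2.2 a haD
      exact Aux.trichotomy hu a (hunit _ hfP) (hup _ hfP) hdet hf1 hf2
    have hv0 : ∀ p ∈ P, ⟪v, p⟫ = 0 := fun p hp => (hPC hp).2
    have hnv : ‖-v‖ = 1 := by rw [norm_neg]; exact hv
    have hnv0 : ∀ p ∈ P, ⟪-v, p⟫ = 0 := by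
      intro p hp; rw [inner_neg_left, hv0 p hp, neg_zero]
    have noPosv := Aux.noPos D hD v (htri v hv hv0)
    have noPosnv := Aux.noPos D hD (-v) (htri (-v) hnv hnv0)
    have hZero : ∀ a ∈ D, ⟪v, a.p⟫ = 0 ∧ ⟪v, a.q⟫ = 0 := by
      intro a haD
      rcases htri v hv hv0 a haD with h | h | h
      · exact absurd h (noPosv a haD)
      · exfalso
        apply noPosnv a haD
        intro x hx
        rw [inner_neg_left]
        linarith [h x hx]
      · exact h
    obtain ⟨a₀, ha₀⟩ := hD.2.1
    obtain ⟨c, hcD, hec⟩ := hD.2.2.2 a₀ ha₀ a₀.p (Aux.mem_endpoints_left a₀)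
    obtain ⟨hcp0, hcq0⟩ := hZero c hcD
    obtain ⟨hap0, haq0⟩ := hZero a₀ ha₀
    obtain ⟨γ, δ, hr⟩ := Aux.span2 c.unit_p c.unit_q hv c.ne c.ne_neg hcp0 hcq0 haq0
    have hec' := hec
    obtain ⟨s, ⟨hs0, hs1⟩, hes⟩ := hec'
    set N := ‖(1 - s) • c.p + s • c.q‖ with hN
    have hNpos : 0 < N := Aux.norm_comb_pos c.unit_p c.unit_q c.ne_neg hs0.le hs1.le
    have hApos : 0 < N⁻¹ * (1 - s) := mul_pos (inv_pos.mpr hNpos) (by linarith)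
    have hBpos : 0 < N⁻¹ * s := mul_pos (inv_pos.mpr hNpos) hs0
    have he_comb : a₀.p = (N⁻¹ * (1 - s)) • c.p + (N⁻¹ * s) • c.q := by
      rw [← hes, gpt, ← hN, smul_add, smul_smul, smul_smul]
    set τ := min (1/2 : ℝ)
      (min ((N⁻¹ * (1 - s)) / (2 * (|γ| + 1))) ((N⁻¹ * s) / (2 * (|δ| + 1)))) with hτ
    have hτ0 : 0 < τ := by
      apply lt_min (by norm_num)
      exact lt_min (by positivity) (by positivity)
    have hτh : τ ≤ 1/2 := min_le_left _ _
    have hτ1 : τ < 1 := lt_of_le_of_lt hτh (by norm_num)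
    set M := ‖(1 - τ) • a₀.p + τ • a₀.q‖ with hM
    have hMpos : 0 < M := Aux.norm_comb_pos a₀.unit_p a₀.unit_q a₀.ne_neg hτ0.le hτ1.le
    have hxmem : gpt a₀.p a₀.q τ ∈ a₀.relint := ⟨τ, ⟨hτ0, hτ1⟩, rfl⟩
    have hxunit : ‖gpt a₀.p a₀.q τ‖ = 1 :=
      Aux.gpt_norm a₀.unit_p a₀.unit_q a₀.ne_neg hτ0.le hτ1.le
    have hxcomb : gpt a₀.p a₀.q τ
        = (M⁻¹ * ((1 - τ) * (N⁻¹ * (1 - s)) + τ * γ)) • c.p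
          + (M⁻¹ * ((1 - τ) * (N⁻¹ * s) + τ * δ)) • c.q := by
      rw [gpt, ← hM, he_comb, hr]
      module
    have hτγ : τ * (2 * (|γ| + 1)) ≤ N⁻¹ * (1 - s) := by
      have h1 : τ ≤ (N⁻¹ * (1 - s)) / (2 * (|γ| + 1)) :=
        le_trans (min_le_right _ _) (min_le_left _ _)
      rwa [le_div_iff₀ (by positivity)] at h1
    have hτδ : τ * (2 * (|δ| + 1)) ≤ N⁻¹ * s := by
      have h1 : τ ≤ (N⁻¹ * s) / (2 * (|δ| + 1)) :=
        le_trans (min_le_right _ _) (min_le_right _ _)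
      rwa [le_div_iff₀ (by positivity)] at h1
    have hA : 0 < M⁻¹ * ((1 - τ) * (N⁻¹ * (1 - s)) + τ * γ) := by
      apply mul_pos (inv_pos.mpr hMpos)
      nlinarith [mul_nonneg hApos.le (by linarith : (0:ℝ) ≤ 1/2 - τ),
        mul_le_mul_of_nonneg_left (neg_abs_le γ) hτ0.le, abs_nonneg γ]
    have hB : 0 < M⁻¹ * ((1 - τ) * (N⁻¹ * s) + τ * δ) := by
      apply mul_pos (inv_pos.mpr hMpos)
      nlinarith [mul_nonneg hBpos.le (by linarith : (0:ℝ) ≤ 1/2 - τ),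
        mul_le_mul_of_nonneg_left (neg_abs_le δ) hτ0.le, abs_nonneg δ]
    have hxrel : gpt a₀.p a₀.q τ ∈ c.relint :=
      Aux.mem_gsegInt_of_comb hA hB hxunit hxcomb
    have hne : a₀ ≠ c := by
      rintro rfl
      exact Aux.left_notin_gsegInt a₀.unit_p a₀.unit_q a₀.ne a₀.ne_neg hec
    have hdisj := hD.2.2.1 a₀ ha₀ c hcD hne
    rw [Set.eq_empty_iff_forall_notMem] at hdisj
    exact hdisj _ ⟨hxmem, hxrel⟩
  refine ⟨part1, ?_⟩
  rintro A ⟨g, hg, rfl⟩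
  -- the attractor spans the whole space
  have hspan : Submodule.span ℝ (g '' ↑P) = ⊤ := by
    by_contra hnetop
    have hbot : (Submodule.span ℝ (g '' (P : Set Pt)))ᗮ ≠ ⊥ := by
      intro h
      exact hnetop (Submodule.orthogonal_eq_bot_iff.mp h)
    obtain ⟨v', hv'mem, hv'ne⟩ := Submodule.exists_mem_ne_zero_of_ne_bot hbot
    have hv'pos : 0 < ‖v'‖ := norm_pos_iff.mpr hv'ne
    apply part1
    refine ⟨{z : Pt | ‖z‖ = 1 ∧ (inner ℝ (‖v'‖⁻¹ • v') z : ℝ) = 0}, ⟨‖v'‖⁻¹ • v', ?_, rfl⟩, ?_⟩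
    · rw [norm_smul, Real.norm_eq_abs, abs_of_pos (inv_pos.mpr hv'pos),
        inv_mul_cancel₀ (ne_of_gt hv'pos)]
    · intro p hp
      have hgp : g p ∈ g '' (P : Set Pt) := Set.mem_image_of_mem g hp
      have h0 : ⟪g p, v'⟫ = 0 :=
        (Submodule.mem_orthogonal _ v').mp hv'mem (g p) (Submodule.subset_span hgp)
      have h1 : ⟪‖v'‖⁻¹ • v', g p⟫ = 0 := by
        rw [real_inner_smul_left, real_inner_comm, h0, mul_zero]
      have h2 : ⟪‖v'‖⁻¹ • v', p⟫ = 0 := by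
        rcases hg p hp with h | h
        · rwa [h] at h1
        · rw [h, inner_neg_right, neg_eq_zero] at h1; exact h1
      exact ⟨hunit p hp, h2⟩
  obtain ⟨s, hsA, hspan', hind⟩ := exists_linearIndependent ℝ (g '' (P : Set Pt))
  rw [hspan] at hspan'
  obtain ⟨B, hBapp⟩ : ∃ B : Module.Basis s ℝ Pt, ∀ j : s, B j = (j : Pt) :=
    ⟨Module.Basis.mk hind (by rw [Subtype.range_val, hspan']),
      fun j => Module.Basis.mk_apply hind _ j⟩
  haveI : Fintype s := FiniteDimensional.fintypeBasisIndex B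
  haveI : Nonempty s := B.index_nonempty
  obtain ⟨T, hTrep⟩ : ∃ T : Pt, ∀ i : s, B.repr T i = 1 := by
    refine ⟨∑ j : s, (j : Pt), fun i => ?_⟩
    have hT2 : (∑ j : s, (j : Pt)) = ∑ j : s, B j :=
      Finset.sum_congr rfl fun j _ => (hBapp j).symm
    rw [hT2, map_sum, Finsupp.finset_sum_apply]
    simp [Module.Basis.repr_self, Finsupp.single_apply]
  have hTne : T ≠ 0 := by
    intro h
    have h2 := hTrep (Classical.arbitrary s)
    rw [h, map_zero] at h2
    simp at h2
  have hTpos : 0 < ‖T‖ := norm_pos_iff.mpr hTne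
  set x : Pt := ‖T‖⁻¹ • T with hx
  have hxunit : ‖x‖ = 1 := by
    rw [hx, norm_smul, Real.norm_eq_abs, abs_of_pos (inv_pos.mpr hTpos),
      inv_mul_cancel₀ (ne_of_gt hTpos)]
  have hxrep : ∀ i : s, 0 < B.repr x i := by
    intro i
    rw [hx, map_smul, Finsupp.smul_apply, hTrep i, smul_eq_mul, mul_one]
    exact inv_pos.mpr hTpos
  have hmem : ∀ y : Pt, ‖y‖ = 1 → (∀ i : s, 0 < B.repr y i) →
      y ∈ sphericalHull (g '' ↑P) := by
    intro y hy hpos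
    set Z := ∑ i : s, B.repr y i with hZdef
    have hZ : 0 < Z := Finset.sum_pos (fun i _ => hpos i) Finset.univ_nonempty
    have hyc : (∑ i : s, B.repr y i • (i : Pt)) = y := by
      have hsr := B.sum_repr y
      calc (∑ i : s, B.repr y i • (i : Pt)) = ∑ i : s, B.repr y i • B i :=
            Finset.sum_congr rfl fun j _ => by rw [hBapp j]
      _ = y := hsr
    have hw : Finset.univ.centerMass (fun i : s => B.repr y i) (fun i : s => (i : Pt))
        ∈ convexHull ℝ (g '' (P : Set Pt)) :=
      Finset.centerMass_mem_convexHull _ (fun i _ => (hpos i).le) hZ (fun i _ => hsA i.2)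
    have hcm : Finset.univ.centerMass (fun i : s => B.repr y i) (fun i : s => (i : Pt))
        = Z⁻¹ • y := by
      rw [Finset.centerMass, ← hZdef, hyc]
    rw [hcm] at hw
    have hyne : y ≠ 0 := by
      intro h; rw [h] at hy; simp at hy
    refine ⟨Z⁻¹ • y, hw, smul_ne_zero (inv_ne_zero (ne_of_gt hZ)) hyne, ?_⟩
    rw [norm_smul, Real.norm_eq_abs, abs_of_pos (inv_pos.mpr hZ), hy, mul_one,
      inv_inv, smul_smul, mul_inv_cancel₀ (ne_of_gt hZ), one_smul]
  have hcont : ∀ i : s, Continuous fun y : Pt => B.repr y i := by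
    intro i
    have : (fun y : Pt => B.repr y i) = fun y => B.coord i y := by
      funext y; rw [Module.Basis.coord_apply]
    rw [this]
    exact (B.coord i).continuous_of_finiteDimensional
  have hUopen : IsOpen (⋂ i : s, (fun y : Pt => B.repr y i) ⁻¹' Set.Ioi 0) :=
    isOpen_iInter_of_finite fun i => (hcont i).isOpen_preimage _ isOpen_Ioi
  have hxU : x ∈ ⋂ i : s, (fun y : Pt => B.repr y i) ⁻¹' Set.Ioi 0 :=
    Set.mem_iInter.mpr fun i => hxrep i
  obtain ⟨ε, hε, hball⟩ := Metric.isOpen_iff.mp hUopen x hxU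
  refine ⟨x, hmem x hxunit hxrep, ε, hε, ?_⟩
  intro y hy hyx
  have hyU : y ∈ ⋂ i : s, (fun y : Pt => B.repr y i) ⁻¹' Set.Ioi 0 := by
    apply hball
    rw [Metric.mem_ball, dist_eq_norm]
    exact hyx
  exact hmem y hy fun i => Set.mem_iInter.mp hyU i

end
end

section
/- If an arc of a k-oriented Spherical Diagram intersects the interior of an attractor hull H, then that arc intersects the boundary of H in at most one point. -/
open scoped RealInnerProductSpace
open scoped Classical

noncomputable section

open scoped Pointwise

/-- The open cone over the convex hull of `A`. -/
def coneK (A : Set Pt) : Set Pt := {x | ∃ c : ℝ, 0 < c ∧ c • x ∈ convexHull ℝ A}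

lemma smul_mem_coneK {A : Set Pt} {x : Pt} (hx : x ∈ coneK A) {c : ℝ} (hc : 0 < c) :
    c • x ∈ coneK A := by
  obtain ⟨d, hd, hdx⟩ := hx
  exact ⟨d / c, by positivity, by rwa [smul_smul, div_mul_cancel₀ _ hc.ne']⟩

lemma coneK_convex (A : Set Pt) : Convex ℝ (coneK A) := by
  intro x hx y hy s t hs ht hst
  obtain ⟨c, hc, hcx⟩ := hx
  obtain ⟨d, hd, hdy⟩ := hy
  rcases eq_or_lt_of_le hs with h | hs'
  · simp only [← h, zero_smul, zero_add] at hst ⊢; rw [hst, one_smul]; exact ⟨d, hd, hdy⟩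
  rcases eq_or_lt_of_le ht with h | ht'
  · simp only [← h, zero_smul, add_zero] at hst ⊢; rw [hst, one_smul]; exact ⟨c, hc, hcx⟩
  refine ⟨(s / c + t / d)⁻¹, by positivity, ?_⟩
  have he : (0:ℝ) < s / c + t / d := by positivity
  have h1 : ((s/c+t/d)⁻¹ * s / c) • (c • x) + ((s/c+t/d)⁻¹ * t / d) • (d • y)
      = (s/c+t/d)⁻¹ • (s • x + t • y) := by
    rw [smul_smul, smul_smul, smul_add, smul_smul, smul_smul]
    congr 1 <;> congr 1 <;> (field_simp)
  rw [← h1]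
  exact convex_convexHull ℝ A hcx hdy (by positivity) (by positivity)
    (by field_simp)

lemma mem_sphericalHull_iff {A : Set Pt} {x : Pt} :
    x ∈ sphericalHull A ↔ x ∈ coneK A ∧ ‖x‖ = 1 := by
  constructor
  · rintro ⟨y, hy, hy0, rfl⟩
    have hny : (0:ℝ) < ‖y‖ := norm_pos_iff.2 hy0
    refine ⟨⟨‖y‖, hny, ?_⟩, ?_⟩
    · rw [smul_smul, mul_inv_cancel₀ hny.ne', one_smul]; exact hy
    · rw [norm_smul, norm_inv, norm_norm, inv_mul_cancel₀ hny.ne']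
  · rintro ⟨⟨c, hc, hcx⟩, hx⟩
    refine ⟨c • x, hcx, ?_, ?_⟩
    · simp only [ne_eq, smul_eq_zero, not_or]
      constructor
      · exact hc.ne'
      · intro h; rw [h, norm_zero] at hx; exact one_ne_zero hx.symm
    · rw [norm_smul, hx, Real.norm_eq_abs, abs_of_pos hc, mul_one, smul_smul,
        inv_mul_cancel₀ hc.ne', one_smul]

lemma smul_mem_interior_coneK {A : Set Pt} {x : Pt} (hx : x ∈ interior (coneK A))
    {c : ℝ} (hc : 0 < c) : c • x ∈ interior (coneK A) := by
  have h1 : c • x ∈ interior (c • coneK A) := by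
    rw [interior_smul₀ hc.ne']
    exact Set.smul_mem_smul_set hx
  refine interior_mono ?_ h1
  rintro y ⟨w, hw, rfl⟩
  exact smul_mem_coneK hw hc

lemma sphInterior_subset_interior_coneK {A : Set Pt} {z : Pt}
    (hz : z ∈ sphInterior (sphericalHull A)) : z ∈ interior (coneK A) := by
  obtain ⟨hzH, ε, hε, hball⟩ := hz
  have hz1 : ‖z‖ = 1 := (mem_sphericalHull_iff.1 hzH).2
  rw [mem_interior_iff_mem_nhds, Metric.mem_nhds_iff]
  refine ⟨min (ε/2) (1/2), by positivity, ?_⟩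
  intro x hx
  rw [Metric.mem_ball, dist_eq_norm] at hx
  have hxz : ‖x - z‖ < min (ε/2) (1/2) := hx
  have hnx : (0:ℝ) < ‖x‖ := by
    have h1 : ‖z‖ - ‖x - z‖ ≤ ‖x‖ := by
      have := norm_sub_norm_le z x
      rw [show z - x = -(x - z) by abel, norm_neg] at this
      linarith
    have : ‖x - z‖ < 1/2 := lt_of_lt_of_le hxz (min_le_right _ _)
    linarith [hz1 ▸ h1]
  set y := ‖x‖⁻¹ • x with hy
  have hy1 : ‖y‖ = 1 := by
    rw [hy, norm_smul, norm_inv, norm_norm, inv_mul_cancel₀ hnx.ne']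
  have hyx : ‖y - x‖ = |1 - ‖x‖| := by
    have : y - x = (‖x‖⁻¹ - 1) • x := by rw [hy, sub_smul, one_smul]
    rw [this, norm_smul, Real.norm_eq_abs]
    rw [abs_sub_comm, show (1:ℝ) - ‖x‖⁻¹ = (‖x‖ - 1) * ‖x‖⁻¹ by field_simp, abs_mul,
      abs_of_pos (inv_pos.2 hnx)]
    rw [mul_assoc, inv_mul_cancel₀ hnx.ne', mul_one, abs_sub_comm]
  have hxn : |1 - ‖x‖| ≤ ‖x - z‖ := by
    have := norm_sub_norm_le x z
    have := norm_sub_norm_le z x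
    rw [show z - x = -(x - z) by abel, norm_neg] at this
    rw [abs_sub_le_iff]; constructor <;> [skip; skip] <;> rw [← hz1] <;> linarith
  have hyz : ‖y - z‖ < ε := by
    have : ‖y - z‖ ≤ ‖y - x‖ + ‖x - z‖ := by
      have := norm_add_le (y - x) (x - z); rw [show y - x + (x - z) = y - z by abel] at this
      exact this
    have h2 : ‖x - z‖ < ε/2 := lt_of_lt_of_le hxz (min_le_left _ _)
    rw [hyx] at this
    linarith
  have hyH : y ∈ sphericalHull A := hball y hy1 hyz
  have hyK : y ∈ coneK A := (mem_sphericalHull_iff.1 hyH).1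
  have : x = ‖x‖ • y := by rw [hy, smul_smul, mul_inv_cancel₀ hnx.ne', one_smul]
  rw [this]
  exact smul_mem_coneK hyK hnx

lemma interior_coneK_subset_sphInterior {A : Set Pt} {x : Pt}
    (hx : x ∈ interior (coneK A)) (hx1 : ‖x‖ = 1) :
    x ∈ sphInterior (sphericalHull A) := by
  rw [mem_interior_iff_mem_nhds, Metric.mem_nhds_iff] at hx
  obtain ⟨ε, hε, hball⟩ := hx
  have hxK : x ∈ coneK A := hball (Metric.mem_ball_self hε)
  refine ⟨mem_sphericalHull_iff.2 ⟨hxK, hx1⟩, ε, hε, ?_⟩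
  intro y hy hyx
  exact mem_sphericalHull_iff.2 ⟨hball (by rwa [Metric.mem_ball, dist_eq_norm]), hy⟩

lemma combo_mem_interior_coneK {A : Set Pt} {u z x : Pt} (hu : u ∈ coneK A)
    (hz : z ∈ interior (coneK A)) {D aa bb : ℝ} (hD : 0 < D) (ha : 0 ≤ aa) (hb : 0 < bb)
    (hx : D • x = aa • u + bb • z) : x ∈ interior (coneK A) := by
  have hs : 0 < aa + bb := by linarith
  have h1 : (bb / (aa + bb)) • z + (aa / (aa + bb)) • u ∈ interior (coneK A) :=
    (coneK_convex A).combo_interior_self_mem_interior hz hu (by positivity)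
      (by positivity) (by field_simp; ring)
  have h2 : ((aa + bb) / D) • ((bb / (aa + bb)) • z + (aa / (aa + bb)) • u)
      ∈ interior (coneK A) := smul_mem_interior_coneK h1 (by positivity)
  have h3 : x = ((aa + bb) / D) • ((bb / (aa + bb)) • z + (aa / (aa + bb)) • u) := by
    have : x = D⁻¹ • (D • x) := by rw [smul_smul, inv_mul_cancel₀ hD.ne', one_smul]
    rw [this, hx, smul_add, smul_add, smul_smul, smul_smul, smul_smul, smul_smul]
    rw [add_comm]
    congr 1 <;> congr 1 <;> field_simp <;> ring
  rw [h3]; exact h2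

def cross3 (p q : Pt) : Pt :=
  WithLp.toLp 2 ![p 1 * q 2 - p 2 * q 1, p 2 * q 0 - p 0 * q 2, p 0 * q 1 - p 1 * q 0]

lemma inner_cross3 (p q x : Pt) : ⟪cross3 p q, x⟫ = det3 p q x := by
  simp [cross3, PiLp.inner_apply, Fin.sum_univ_three, det3, RCLike.inner_apply, conj_trivial]
  ring

lemma cross3_ne_zero {p q : Pt} (hp : ‖p‖ = 1) (hq : ‖q‖ = 1) (hpq : p ≠ q)
    (hpq' : p ≠ -q) : cross3 p q ≠ 0 := by
  intro h
  have hL : ⟪cross3 p q, cross3 p q⟫ = ⟪p,p⟫ * ⟪q,q⟫ - ⟪p,q⟫^2 := by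
    rw [PiLp.inner_apply, PiLp.inner_apply, PiLp.inner_apply, PiLp.inner_apply]
    simp [cross3, Fin.sum_univ_three, RCLike.inner_apply, conj_trivial]
    ring
  rw [h, inner_zero_left] at hL
  have hpp : ⟪p,p⟫ = 1 := by rw [real_inner_self_eq_norm_sq, hp]; norm_num
  have hqq : ⟪q,q⟫ = 1 := by rw [real_inner_self_eq_norm_sq, hq]; norm_num
  rw [hpp, hqq, mul_one] at hL
  have hsq : ⟪p,q⟫^2 = 1 := by linarith
  have hcase : ⟪p,q⟫ = 1 ∨ ⟪p,q⟫ = -1 := by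
    have h0 : (⟪p,q⟫ - 1) * (⟪p,q⟫ + 1) = 0 := by nlinarith
    rcases mul_eq_zero.mp h0 with h | h
    · left; linarith
    · right; linarith
  rcases hcase with h1 | h1
  · apply hpq
    have : ‖p - q‖^2 = 0 := by
      rw [norm_sub_sq_real, hp, hq, h1]; norm_num
    have := pow_eq_zero_iff (n := 2) (by norm_num) |>.mp this
    rwa [norm_eq_zero, sub_eq_zero] at this
  · apply hpq'
    have : ‖p + q‖^2 = 0 := by
      rw [norm_add_sq_real, hp, hq, h1]; norm_num
    have := pow_eq_zero_iff (n := 2) (by norm_num) |>.mp this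
    rw [norm_eq_zero] at this
    rw [eq_neg_iff_add_eq_zero]
    exact this

lemma nonzero_combo {p q : Pt} (hp : ‖p‖ = 1) (hq : ‖q‖ = 1) (hpq' : p ≠ -q)
    {t : ℝ} (ht : t ∈ Set.Icc (0:ℝ) 1) : (1 - t) • p + t • q ≠ 0 := by
  intro h
  have h2 : (1 - t) • p = -(t • q) := add_eq_zero_iff_eq_neg.mp h
  have hn : |1 - t| = |t| := by
    have h3 := congrArg norm h2
    rwa [norm_neg, norm_smul, norm_smul, hp, hq, mul_one, mul_one,
      Real.norm_eq_abs, Real.norm_eq_abs] at h3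
  obtain ⟨ht0, ht1⟩ := ht
  rw [abs_of_nonneg (by linarith), abs_of_nonneg ht0] at hn
  have ht2 : t = 1/2 := by linarith
  rw [ht2] at h
  have h4 : ((1:ℝ)/2) • (p + q) = 0 := by
    rw [smul_add]; convert h using 2; norm_num
  have h5 : p + q = 0 := by
    rcases smul_eq_zero.mp h4 with h | h
    · norm_num at h
    · exact h
  exact hpq' (eq_neg_iff_add_eq_zero.mpr h5)

lemma mem_gseg_norm {p q : Pt} (hp : ‖p‖ = 1) (hq : ‖q‖ = 1) (hpq' : p ≠ -q)
    {x : Pt} (hx : x ∈ gseg p q) : ‖x‖ = 1 := by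
  obtain ⟨t, ht, rfl⟩ := hx
  have hne := nonzero_combo hp hq hpq' ht
  rw [gpt, norm_smul, norm_inv, norm_norm, inv_mul_cancel₀ (norm_ne_zero_iff.2 hne)]

lemma mem_gseg_inner_cross {p q : Pt} (hp : ‖p‖ = 1) (hq : ‖q‖ = 1) (hpq' : p ≠ -q)
    {x : Pt} (hx : x ∈ gseg p q) : ⟪cross3 p q, x⟫ = 0 := by
  obtain ⟨t, ht, rfl⟩ := hx
  rw [gpt, real_inner_smul_right, inner_add_right, real_inner_smul_right,
    real_inner_smul_right, inner_cross3, inner_cross3]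
  have h1 : det3 p q p = 0 := by simp [det3]; ring
  have h2 : det3 p q q = 0 := by simp [det3]; ring
  rw [h1, h2]; ring

/-- Expansion of a vector orthogonal to `w` in an orthonormal triple `v, e2, w`. -/
lemma expand3 {v e2 w : Pt} (hv : ‖v‖ = 1) (he : ‖e2‖ = 1) (hw : ‖w‖ = 1)
    (hve : ⟪v, e2⟫ = 0) (hvw : ⟪v, w⟫ = 0) (hew : ⟪e2, w⟫ = 0)
    {x : Pt} (hx : ⟪w, x⟫ = 0) : x = ⟪v, x⟫ • v + ⟪e2, x⟫ • e2 := by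
  have hvv : ⟪v, v⟫ = 1 := by rw [real_inner_self_eq_norm_sq, hv]; norm_num
  have hee : ⟪e2, e2⟫ = 1 := by rw [real_inner_self_eq_norm_sq, he]; norm_num
  have hww : ⟪w, w⟫ = 1 := by rw [real_inner_self_eq_norm_sq, hw]; norm_num
  have hev : ⟪e2, v⟫ = 0 := by rw [real_inner_comm]; exact hve
  have hwv : ⟪w, v⟫ = 0 := by rw [real_inner_comm]; exact hvw
  have hwe : ⟪w, e2⟫ = 0 := by rw [real_inner_comm]; exact hew
  set f : Fin 3 → Pt := ![v, e2, w] with hf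
  have horth : Orthonormal ℝ f := by
    rw [orthonormal_iff_ite]
    intro i j
    fin_cases i <;> fin_cases j <;>
      simp only [hf, Matrix.cons_val_zero, Matrix.cons_val_one, Matrix.head_cons,
        Matrix.cons_val_two, Matrix.tail_cons] <;>
      simp [hvv, hee, hww, hve, hvw, hew, hev, hwv, hwe, hv, he, hw]
  have hspan : Submodule.span ℝ (Set.range f) = ⊤ :=
    horth.linearIndependent.span_eq_top_of_card_eq_finrank (by simp)
  set r : Pt := x - ⟪v, x⟫ • v - ⟪e2, x⟫ • e2 with hr
  have h1 : ⟪v, r⟫ = 0 := by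
    simp only [hr, inner_sub_right, real_inner_smul_right, hvv, hve]; ring
  have h2 : ⟪e2, r⟫ = 0 := by
    simp only [hr, inner_sub_right, real_inner_smul_right, hev, hee]; ring
  have h3 : ⟪w, r⟫ = 0 := by
    simp only [hr, inner_sub_right, real_inner_smul_right, hwv, hwe, hx]; ring
  have hfr : ∀ i, ⟪f i, r⟫ = 0 := by
    intro i
    fin_cases i <;>
      simp only [hf, Matrix.cons_val_zero, Matrix.cons_val_one, Matrix.head_cons,
        Matrix.cons_val_two, Matrix.tail_cons] <;> assumption
  have hrr : r ∈ Submodule.span ℝ (Set.range f) := by rw [hspan]; trivial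
  obtain ⟨c, hc⟩ := Submodule.mem_span_range_iff_exists_fun ℝ |>.mp hrr
  have hz : ⟪r, r⟫ = 0 := by
    nth_rewrite 1 [← hc]
    rw [sum_inner]
    apply Finset.sum_eq_zero
    intro i _
    rw [real_inner_smul_left, hfr i]; ring
  have hr0 : r = 0 := inner_self_eq_zero.mp hz
  have h4 : x - (⟪v, x⟫ • v + ⟪e2, x⟫ • e2) = 0 := by
    rw [← hr0, hr]; abel
  exact sub_eq_zero.mp h4

/-- Cramer's rule in the plane spanned by `v, e2`. -/
lemma cramer3 {v e2 x u w : Pt} {cx sx cu su cw sw : ℝ}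
    (hx : x = cx • v + sx • e2) (hu : u = cu • v + su • e2) (hw : w = cw • v + sw • e2) :
    (cu*sw - su*cw) • x = (cx*sw - sx*cw) • u + (cu*sx - su*cx) • w := by
  rw [hx, hu, hw]
  module

/-- Two unit vectors of the upper half plane with proportional coordinates are equal. -/
lemma coord_eq {cx sx cy sy : ℝ} (hx : cx^2 + sx^2 = 1) (hy : cy^2 + sy^2 = 1)
    (hsx : 0 < sx) (hsy : 0 < sy) (hd : cx * sy - sx * cy = 0) : cx = cy ∧ sx = sy := by
  have h1 : (sy - sx) * (sy + sx) = 0 := by linear_combination sx^2 * hy - sy^2 * hx + (cx*sy + sx*cy) * hd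
  have h2 : sy = sx := by
    rcases mul_eq_zero.mp h1 with h | h
    · linarith
    · linarith
  refine ⟨?_, h2.symm⟩
  rw [h2] at hd
  have h3 : cx * sx = cy * sx := by linear_combination hd
  exact mul_right_cancel₀ hsx.ne' h3

lemma continuousOn_gpt {p q : Pt} (hp : ‖p‖ = 1) (hq : ‖q‖ = 1) (hpq' : p ≠ -q) :
    ContinuousOn (gpt p q) (Set.Icc (0:ℝ) 1) := by
  have hw : Continuous (fun t : ℝ => (1 - t) • p + t • q) := by
    apply Continuous.add
    · exact (continuous_const.sub continuous_id).smul continuous_const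
    · exact continuous_id.smul continuous_const
  have hne : ∀ t ∈ Set.Icc (0:ℝ) 1, ‖(1 - t) • p + t • q‖ ≠ 0 :=
    fun t ht => norm_ne_zero_iff.2 (nonzero_combo hp hq hpq' ht)
  exact ((hw.norm.continuousOn).inv₀ hne).smul hw.continuousOn

lemma isPreconnected_gseg {p q : Pt} (hp : ‖p‖ = 1) (hq : ‖q‖ = 1) (hpq' : p ≠ -q) :
    IsPreconnected (gseg p q) :=
  isPreconnected_Icc.image _ (continuousOn_gpt hp hq hpq')

lemma sign_const {p q e2 : Pt} (hp : ‖p‖ = 1) (hq : ‖q‖ = 1) (hpq' : p ≠ -q)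
    (hne : ∀ x ∈ gseg p q, ⟪e2, x⟫ ≠ 0)
    {y z : Pt} (hy : y ∈ gseg p q) (hz : z ∈ gseg p q) (hzpos : 0 < ⟪e2, z⟫) :
    0 < ⟪e2, y⟫ := by
  rcases lt_trichotomy (⟪e2, y⟫ : ℝ) 0 with h | h | h
  · exfalso
    have hcont : Continuous (fun x : Pt => (⟪e2, x⟫ : ℝ)) :=
      continuous_const.inner continuous_id
    have hS : IsPreconnected ((fun x : Pt => (⟪e2, x⟫ : ℝ)) '' gseg p q) :=
      (isPreconnected_gseg hp hq hpq').image _ hcont.continuousOn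
    have h0 : (0:ℝ) ∈ Set.Icc (⟪e2, y⟫ : ℝ) (⟪e2, z⟫ : ℝ) := ⟨le_of_lt h, le_of_lt hzpos⟩
    have hsub := hS.Icc_subset (Set.mem_image_of_mem _ hy) (Set.mem_image_of_mem _ hz)
    obtain ⟨x, hxg, hx0⟩ := hsub h0
    exact hne x hxg hx0
  · exact absurd h (hne y hy)
  · exact h


lemma norm_coord {v e2 x : Pt} (hv : ‖v‖ = 1) (he : ‖e2‖ = 1) (hve : ⟪v, e2⟫ = 0)
    {c s : ℝ} (hx : x = c • v + s • e2) (hx1 : ‖x‖ = 1) : c^2 + s^2 = 1 := by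
  have hvv : ⟪v, v⟫ = 1 := by rw [real_inner_self_eq_norm_sq, hv]; norm_num
  have hee : ⟪e2, e2⟫ = 1 := by rw [real_inner_self_eq_norm_sq, he]; norm_num
  have hev : ⟪e2, v⟫ = 0 := by rw [real_inner_comm]; exact hve
  have h : ⟪x, x⟫ = c^2 + s^2 := by
    rw [hx]
    simp only [inner_add_left, inner_add_right, real_inner_smul_left, real_inner_smul_right,
      hvv, hee, hve, hev]
    ring
  rw [real_inner_self_eq_norm_sq, hx1] at h
  linarith

lemma d_ne_zero {v e2 x y : Pt} (hv : ‖v‖ = 1) (he : ‖e2‖ = 1) (hve : ⟪v, e2⟫ = 0)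
    {cx sx cy sy : ℝ} (hx : x = cx • v + sx • e2) (hy : y = cy • v + sy • e2)
    (hnx : ‖x‖ = 1) (hny : ‖y‖ = 1) (hsx : 0 < sx) (hsy : 0 < sy)
    (h : cx * sy - sx * cy = 0) : x = y := by
  obtain ⟨hc, hs⟩ := coord_eq (norm_coord hv he hve hx hnx) (norm_coord hv he hve hy hny)
    hsx hsy h
  rw [hx, hy, hc, hs]

set_option maxHeartbeats 1000000 in
lemma core {A : Set Pt} {p q v : Pt}
    (hp : ‖p‖ = 1) (hq : ‖q‖ = 1) (hpq : p ≠ q) (hpq' : p ≠ -q)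
    (hv : ‖v‖ = 1) (hvdet : det3 p q v = 0)
    (hvg : v ∉ gseg p q) (hvg' : -v ∉ gseg p q)
    (hvK : v ∈ coneK A)
    {x1 x2 z : Pt} (h1c : x1 ∈ gseg p q) (h2c : x2 ∈ gseg p q) (hzc : z ∈ gseg p q)
    (h1 : x1 ∈ sphBoundary (sphericalHull A)) (h2 : x2 ∈ sphBoundary (sphericalHull A))
    (hz : z ∈ sphInterior (sphericalHull A)) : x1 = x2 := by
  -- basic normal vector facts
  set n : Pt := cross3 p q with hn
  have hnne : n ≠ 0 := cross3_ne_zero hp hq hpq hpq'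
  have hnnorm : (0:ℝ) < ‖n‖ := norm_pos_iff.2 hnne
  set w : Pt := ‖n‖⁻¹ • n with hwdef
  have hw1 : ‖w‖ = 1 := by
    rw [hwdef, norm_smul, norm_inv, norm_norm, inv_mul_cancel₀ hnnorm.ne']
  have hinner_w : ∀ x : Pt, ⟪n, x⟫ = 0 → ⟪w, x⟫ = 0 := by
    intro x hx
    rw [hwdef, real_inner_smul_left, hx, mul_zero]
  have hwseg : ∀ x ∈ gseg p q, ⟪w, x⟫ = 0 :=
    fun x hx => hinner_w x (mem_gseg_inner_cross hp hq hpq' hx)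
  have hwv : ⟪w, v⟫ = 0 := hinner_w v (by rw [hn, inner_cross3]; exact hvdet)
  -- unit norms
  have hnx1 : ‖x1‖ = 1 := mem_gseg_norm hp hq hpq' h1c
  have hnx2 : ‖x2‖ = 1 := mem_gseg_norm hp hq hpq' h2c
  have hnz : ‖z‖ = 1 := mem_gseg_norm hp hq hpq' hzc
  -- points of the segment are not ±v
  have hnotv : ∀ x ∈ gseg p q, x ≠ v ∧ x ≠ -v := by
    intro x hx
    constructor
    · rintro rfl; exact hvg hx
    · rintro rfl; exact hvg' (by simpa using hx)
  -- a point of the segment is not a multiple of v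
  have hnomul : ∀ x ∈ gseg p q, ∀ c : ℝ, x ≠ c • v := by
    intro x hx c hmul
    have hx1 : ‖x‖ = 1 := mem_gseg_norm hp hq hpq' hx
    have : |c| = 1 := by
      rw [hmul, norm_smul, hv, mul_one, Real.norm_eq_abs] at hx1
      exact hx1
    rcases abs_eq (by norm_num : (0:ℝ) ≤ 1) |>.mp this with h | h
    · exact (hnotv x hx).1 (by rw [hmul, h, one_smul])
    · exact (hnotv x hx).2 (by rw [hmul, h]; module)
  -- construction of e2
  set u0 : Pt := z - ⟪v, z⟫ • v with hu0
  have hu0ne : u0 ≠ 0 := by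
    intro h
    exact hnomul z hzc ⟪v, z⟫ (by rw [← sub_eq_zero]; exact hu0 ▸ h)
  have hu0pos : (0:ℝ) < ‖u0‖ := norm_pos_iff.2 hu0ne
  set e2 : Pt := ‖u0‖⁻¹ • u0 with he2def
  have he2 : ‖e2‖ = 1 := by
    rw [he2def, norm_smul, norm_inv, norm_norm, inv_mul_cancel₀ hu0pos.ne']
  have hvv : ⟪v, v⟫ = 1 := by rw [real_inner_self_eq_norm_sq, hv]; norm_num
  have hvu0 : ⟪v, u0⟫ = 0 := by
    rw [hu0, inner_sub_right, real_inner_smul_right, hvv, mul_one, sub_self]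
  have hve2 : ⟪v, e2⟫ = 0 := by
    rw [he2def, real_inner_smul_right, hvu0, mul_zero]
  have hwu0 : ⟪w, u0⟫ = 0 := by
    rw [hu0, inner_sub_right, real_inner_smul_right, hwv, hwseg z hzc, mul_zero, sub_zero]
  have hwe2 : ⟪w, e2⟫ = 0 := by
    rw [he2def, real_inner_smul_right, hwu0, mul_zero]
  have hvw : ⟪v, w⟫ = 0 := by rw [real_inner_comm]; exact hwv
  have hew : ⟪e2, w⟫ = 0 := by rw [real_inner_comm]; exact hwe2
  -- expansion of segment points and of v
  have hexp : ∀ x ∈ gseg p q, x = ⟪v, x⟫ • v + ⟪e2, x⟫ • e2 := by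
    intro x hx
    exact expand3 hv he2 hw1 hve2 hvw hew (hwseg x hx)
  have hexpv : v = (1:ℝ) • v + (0:ℝ) • e2 := by rw [one_smul, zero_smul, add_zero]
  -- sz > 0
  have hszpos : (0:ℝ) < ⟪e2, z⟫ := by
    have hz2 : z = u0 + ⟪v, z⟫ • v := by rw [hu0]; abel
    have huv : ⟪u0, v⟫ = 0 := by rw [real_inner_comm]; exact hvu0
    have hzz : ⟪e2, z⟫ = ‖u0‖⁻¹ * ⟪u0, u0⟫ := by
      rw [he2def, real_inner_smul_left]
      congr 1
      rw [hz2, inner_add_right, real_inner_smul_right, huv, mul_zero, add_zero]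
    rw [hzz, real_inner_self_eq_norm_sq]
    positivity
  -- e2-coordinate never vanishes on the segment
  have hkey : ∀ x ∈ gseg p q, ⟪e2, x⟫ ≠ 0 := by
    intro x hx h0
    have := hexp x hx
    rw [h0, zero_smul, add_zero] at this
    exact hnomul x hx ⟪v, x⟫ this
  have hs1pos : (0:ℝ) < ⟪e2, x1⟫ := sign_const hp hq hpq' hkey h1c hzc hszpos
  have hs2pos : (0:ℝ) < ⟪e2, x2⟫ := sign_const hp hq hpq' hkey h2c hzc hszpos
  -- coordinates
  set c1 : ℝ := ⟪v, x1⟫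
  set s1 : ℝ := ⟪e2, x1⟫
  set c2 : ℝ := ⟪v, x2⟫
  set s2 : ℝ := ⟪e2, x2⟫
  set cz : ℝ := ⟪v, z⟫
  set sz : ℝ := ⟪e2, z⟫
  have hexp1 : x1 = c1 • v + s1 • e2 := hexp x1 h1c
  have hexp2 : x2 = c2 • v + s2 • e2 := hexp x2 h2c
  have hexpz : z = cz • v + sz • e2 := hexp z hzc
  -- membership in the cone
  have hzint : z ∈ interior (coneK A) := sphInterior_subset_interior_coneK hz
  have hx1K : x1 ∈ coneK A := (mem_sphericalHull_iff.1 h1.1).1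
  have hx2K : x2 ∈ coneK A := (mem_sphericalHull_iff.1 h2.1).1
  have hx1not : x1 ∉ sphInterior (sphericalHull A) := h1.2
  have hx2not : x2 ∉ sphInterior (sphericalHull A) := h2.2
  have hzx1 : z ≠ x1 := fun h => hx1not (h ▸ hz)
  have hzx2 : z ≠ x2 := fun h => hx2not (h ▸ hz)
  -- the contradiction builder
  have absurd1 : x1 ∈ interior (coneK A) → False := by
    intro h
    exact hx1not (interior_coneK_subset_sphInterior h hnx1)
  have absurd2 : x2 ∈ interior (coneK A) → False := by
    intro h
    exact hx2not (interior_coneK_subset_sphInterior h hnx2)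
  -- trichotomy on d(z, x1)
  rcases lt_trichotomy (cz * s1 - sz * c1) 0 with hdz1 | hdz1 | hdz1
  · -- x1 between v and z : x1 interior, contradiction
    exfalso
    have hcr := cramer3 (v := v) (e2 := e2) hexp1 hexpv hexpz
    have hD : (0:ℝ) < 1 * sz - 0 * cz := by linarith
    have haa : (0:ℝ) ≤ c1 * sz - s1 * cz := by linarith
    have hbb : (0:ℝ) < 1 * s1 - 0 * c1 := by linarith
    exact absurd1 (combo_mem_interior_coneK hvK hzint hD haa hbb hcr)
  · exact absurd (d_ne_zero hv he2 hve2 hexpz hexp1 hnz hnx1 hszpos hs1pos hdz1) hzx1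
  rcases lt_trichotomy (cz * s2 - sz * c2) 0 with hdz2 | hdz2 | hdz2
  · exfalso
    have hcr := cramer3 (v := v) (e2 := e2) hexp2 hexpv hexpz
    have hD : (0:ℝ) < 1 * sz - 0 * cz := by linarith
    have haa : (0:ℝ) ≤ c2 * sz - s2 * cz := by linarith
    have hbb : (0:ℝ) < 1 * s2 - 0 * c2 := by linarith
    exact absurd2 (combo_mem_interior_coneK hvK hzint hD haa hbb hcr)
  · exact absurd (d_ne_zero hv he2 hve2 hexpz hexp2 hnz hnx2 hszpos hs2pos hdz2) hzx2
  -- both beyond z; compare x1 and x2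
  rcases lt_trichotomy (c1 * s2 - s1 * c2) 0 with hd12 | hd12 | hd12
  · -- x2 strictly between z and x1
    exfalso
    have hcr := cramer3 (v := v) (e2 := e2) hexp2 hexpz hexp1
    rw [add_comm] at hcr
    have haa : (0:ℝ) ≤ cz * s2 - sz * c2 := by linarith
    have hbb : (0:ℝ) < c2 * s1 - s2 * c1 := by linarith
    exact absurd2 (combo_mem_interior_coneK hx1K hzint hdz1 haa hbb hcr)
  · exact d_ne_zero hv he2 hve2 hexp1 hexp2 hnx1 hnx2 hs1pos hs2pos hd12
  · -- x1 strictly between z and x2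
    exfalso
    have hcr := cramer3 (v := v) (e2 := e2) hexp1 hexpz hexp2
    rw [add_comm] at hcr
    have haa : (0:ℝ) ≤ cz * s1 - sz * c1 := by linarith
    have hbb : (0:ℝ) < c1 * s2 - s1 * c2 := by linarith
    exact absurd1 (combo_mem_interior_coneK hx2K hzint hdz2 haa hbb hcr)

/-- If an arc of a k-oriented SD intersects the interior of an
attractor hull `H`, then it intersects the boundary of `H` in at most one point. -/
theorem statement_13 (D : Set Arc) (hD : IsSD D) (k : ℕ) (P : Finset Pt) (f : Arc → Pt)
    (hcard : P.card = k) (hor : OrientedBy D P f) (A : Set Pt) (hA : IsAttractor P A)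
    (a : Arc) (ha : a ∈ D)
    (hint : (a.carrier ∩ sphInterior (sphericalHull A)).Nonempty) :
    (a.carrier ∩ sphBoundary (sphericalHull A)).Subsingleton := by
  intro x1 hx1 x2 hx2
  obtain ⟨z, hzc, hzint⟩ := hint
  obtain ⟨g, hg, hgA⟩ := hA
  obtain ⟨hP1, hP2, hP3⟩ := hor
  obtain ⟨hfP, hdet, hnotf, hnotf'⟩ := hP3 a ha
  have hfa1 : ‖f a‖ = 1 := hP1 _ hfP
  have hdetneg : det3 a.p a.q (-(f a)) = -det3 a.p a.q (f a) := by
    simp only [det3, PiLp.neg_apply]; ring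
  rcases hg (f a) hfP with hcase | hcase
  · have hvA : f a ∈ A := by rw [hgA]; exact ⟨f a, Finset.mem_coe.mpr hfP, hcase⟩
    have hvK : f a ∈ coneK A :=
      ⟨1, one_pos, by rw [one_smul]; exact subset_convexHull ℝ A hvA⟩
    exact core a.unit_p a.unit_q a.ne a.ne_neg hfa1 hdet hnotf hnotf' hvK
      hx1.1 hx2.1 hzc hx1.2 hx2.2 hzint
  · have hvA : -(f a) ∈ A := by rw [hgA]; exact ⟨f a, Finset.mem_coe.mpr hfP, hcase⟩
    have hvK : -(f a) ∈ coneK A :=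
      ⟨1, one_pos, by rw [one_smul]; exact subset_convexHull ℝ A hvA⟩
    have hv1 : ‖-(f a)‖ = 1 := by rw [norm_neg]; exact hfa1
    have hdetv : det3 a.p a.q (-(f a)) = 0 := by rw [hdetneg, hdet, neg_zero]
    have hvg' : -(-(f a)) ∉ a.carrier := by rw [neg_neg]; exact hnotf
    exact core a.unit_p a.unit_q a.ne a.ne_neg hv1 hdetv hnotf' hvg' hvK
      hx1.1 hx2.1 hzc hx1.2 hx2.2 hzint

end
end
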